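/- arXiv:1108.2002 — 10 statements merged into one kernel-verified Lean document; each statement's English description precedes it below -/
import Mathlib

section
/- Let 0 < ε ≤ μ ≤ 1, let α > 0, let A = (a_{ij})_{i,j=1,2} : [0,1] → ℝ^{2×2} be continuous with ξᵀA(x)ξ ≥ α²‖ξ‖² for all ξ ∈ ℝ² and all x ∈ [0,1], and let f, g : [0,1] → ℝ be continuous. If u, v : [0,1] → ℝ are twice continuously differentiable, satisfy −ε²u''(x) + a₁₁(x)u(x) + a₁₂(x)v(x) = f(x) and −μ²v''(x) + a₂₁(x)u(x) + a₂₂(x)v(x) = g(x) for all x ∈ (0,1), and u(0)=u(1)=v(0)=v(1)=0, then ε²∫₀¹ u'(x)² dx + μ²∫₀¹ v'(x)² dx + α²(∫₀¹ u(x)² dx + ∫₀¹ v(x)² dx) ≤ α^{-2}(∫₀¹ f(x)² dx + ∫₀¹ g(x)² dx). -/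
open Set MeasureTheory intervalIntegral

/-! Testing the first equation with `u` and the second with `v`, integrating by parts (the boundary
terms vanish) and using the coercivity of `A` pointwise gives
`ε²‖u'‖² + μ²‖v'‖² + α²(‖u‖² + ‖v‖²) ≤ ∫ (f u + g v)`. Young's inequality
`2 f u ≤ α⁻² f² + α² u²` bounds the right-hand side by `½ α⁻²(‖f‖² + ‖g‖²) + ½ α²(‖u‖² + ‖v‖²)`,
and absorbing the last term yields the estimate. -/

theorem integral_mul_second_deriv_eq_neg_integral_sq {a b : ℝ} {u u' u'' : ℝ → ℝ}
    (hu : ∀ x ∈ uIcc a b, HasDerivAt u (u' x) x) (hu' : ∀ x ∈ uIcc a b, HasDerivAt u' (u'' x) x)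
    (hu'' : IntervalIntegrable u'' volume a b) (ha : u a = 0) (hb : u b = 0) :
    ∫ x in a..b, u x * u'' x = -∫ x in a..b, u' x ^ 2 := by
  rw [integral_mul_deriv_eq_deriv_mul hu hu' (HasDerivAt.continuousOn hu').intervalIntegrable hu'',
    ha, hb]
  simp [sq]

theorem two_mul_mul_le_inv_mul_sq_add_mul_sq {c : ℝ} (hc : 0 < c) (s t : ℝ) :
    2 * (s * t) ≤ c⁻¹ * s ^ 2 + c * t ^ 2 := by
  have hsq : c⁻¹ * s ^ 2 + c * t ^ 2 - 2 * (s * t) = c⁻¹ * (s - c * t) ^ 2 := by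
    field_simp
    ring
  linarith [mul_nonneg (inv_nonneg.2 hc.le) (sq_nonneg (s - c * t))]

section Energy

variable {a b : ℝ} {f g u v : ℝ → ℝ}

theorem two_mul_integral_mul_add_mul_le {c : ℝ} (hab : a ≤ b) (hc : 0 < c)
    (hf : ContinuousOn f (Icc a b)) (hg : ContinuousOn g (Icc a b))
    (hu : ContinuousOn u (Icc a b)) (hv : ContinuousOn v (Icc a b)) :
    2 * ∫ x in a..b, (f x * u x + g x * v x) ≤
      c⁻¹ * ((∫ x in a..b, f x ^ 2) + ∫ x in a..b, g x ^ 2) +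
        c * ((∫ x in a..b, u x ^ 2) + ∫ x in a..b, v x ^ 2) := by
  have hInt : ∀ {h : ℝ → ℝ}, ContinuousOn h (Icc a b) → IntervalIntegrable h volume a b :=
    ContinuousOn.intervalIntegrable_of_Icc hab
  calc 2 * ∫ x in a..b, (f x * u x + g x * v x)
      = ∫ x in a..b, 2 * (f x * u x) + 2 * (g x * v x) := by
        rw [← intervalIntegral.integral_const_mul]
        simp only [mul_add]
    _ ≤ ∫ x in a..b, (c⁻¹ * f x ^ 2 + c * u x ^ 2) + (c⁻¹ * g x ^ 2 + c * v x ^ 2) :=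
        integral_mono_on hab (hInt (by fun_prop)) (hInt (by fun_prop)) fun x _ =>
          add_le_add (two_mul_mul_le_inv_mul_sq_add_mul_sq hc _ _)
            (two_mul_mul_le_inv_mul_sq_add_mul_sq hc _ _)
    _ = _ := by
        rw [integral_add (hInt (by fun_prop)) (hInt (by fun_prop)),
          integral_add (hInt (by fun_prop)) (hInt (by fun_prop)),
          integral_add (hInt (by fun_prop)) (hInt (by fun_prop)),
          intervalIntegral.integral_const_mul, intervalIntegral.integral_const_mul,
          intervalIntegral.integral_const_mul, intervalIntegral.integral_const_mul]
        ring

theorem energy_le_integral_mul_add_mul {ε μ c : ℝ} (hab : a ≤ b)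
    {a₁₁ a₁₂ a₂₁ a₂₂ u' v' u'' v'' : ℝ → ℝ}
    (hA : ∀ x ∈ Ioo a b, ∀ ξ₁ ξ₂ : ℝ,
      c * (ξ₁ ^ 2 + ξ₂ ^ 2) ≤ ξ₁ * (a₁₁ x * ξ₁ + a₁₂ x * ξ₂) + ξ₂ * (a₂₁ x * ξ₁ + a₂₂ x * ξ₂))
    (hf : ContinuousOn f (Icc a b)) (hg : ContinuousOn g (Icc a b))
    (hu' : ∀ x ∈ Icc a b, HasDerivAt u (u' x) x) (hu'' : ∀ x ∈ Icc a b, HasDerivAt u' (u'' x) x)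
    (hv' : ∀ x ∈ Icc a b, HasDerivAt v (v' x) x) (hv'' : ∀ x ∈ Icc a b, HasDerivAt v' (v'' x) x)
    (hu''c : ContinuousOn u'' (Icc a b)) (hv''c : ContinuousOn v'' (Icc a b))
    (heq₁ : ∀ x ∈ Ioo a b, -ε ^ 2 * u'' x + a₁₁ x * u x + a₁₂ x * v x = f x)
    (heq₂ : ∀ x ∈ Ioo a b, -μ ^ 2 * v'' x + a₂₁ x * u x + a₂₂ x * v x = g x)
    (hua : u a = 0) (hub : u b = 0) (hva : v a = 0) (hvb : v b = 0) :
    ε ^ 2 * (∫ x in a..b, u' x ^ 2) + μ ^ 2 * (∫ x in a..b, v' x ^ 2) +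
      c * ((∫ x in a..b, u x ^ 2) + ∫ x in a..b, v x ^ 2) ≤
      ∫ x in a..b, (f x * u x + g x * v x) := by
  have hInt : ∀ {h : ℝ → ℝ}, ContinuousOn h (Icc a b) → IntervalIntegrable h volume a b :=
    ContinuousOn.intervalIntegrable_of_Icc hab
  have hu := HasDerivAt.continuousOn hu'
  have hv := HasDerivAt.continuousOn hv'
  have hpointwise : ∀ x ∈ Ioo a b, c * u x ^ 2 + c * v x ^ 2 ≤
      (f x * u x + g x * v x) + ε ^ 2 * (u x * u'' x) + μ ^ 2 * (v x * v'' x) := by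
    intro x hx
    rw [← heq₁ x hx, ← heq₂ x hx]
    linear_combination hA x hx (u x) (v x)
  have hintegrated :=
    integral_mono_on_of_le_Ioo hab (hInt (by fun_prop)) (hInt (by fun_prop)) hpointwise
  rw [integral_add (hInt (by fun_prop)) (hInt (by fun_prop)),
    integral_add (hInt (by fun_prop)) (hInt (by fun_prop)),
    integral_add (hInt (by fun_prop)) (hInt (by fun_prop)),
    intervalIntegral.integral_const_mul, intervalIntegral.integral_const_mul,
    intervalIntegral.integral_const_mul, intervalIntegral.integral_const_mul,
    integral_mul_second_deriv_eq_neg_integral_sq (by rwa [uIcc_of_le hab]) (by rwa [uIcc_of_le hab])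
      (hInt hu''c) hua hub,
    integral_mul_second_deriv_eq_neg_integral_sq (by rwa [uIcc_of_le hab]) (by rwa [uIcc_of_le hab])
      (hInt hv''c) hva hvb] at hintegrated
  linarith

end Energy

theorem stmt_0_general
    (ε μ α : ℝ) (hα : 0 < α)
    (a₁₁ a₁₂ a₂₁ a₂₂ f g : ℝ → ℝ)
    (hf : ContinuousOn f (Icc 0 1)) (hg : ContinuousOn g (Icc 0 1))
    (hA : ∀ x ∈ Icc (0:ℝ) 1, ∀ ξ₁ ξ₂ : ℝ,
      α ^ 2 * (ξ₁ ^ 2 + ξ₂ ^ 2) ≤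
        ξ₁ * (a₁₁ x * ξ₁ + a₁₂ x * ξ₂) + ξ₂ * (a₂₁ x * ξ₁ + a₂₂ x * ξ₂))
    (u v u' v' u'' v'' : ℝ → ℝ)
    (hu' : ∀ x ∈ Icc (0:ℝ) 1, HasDerivAt u (u' x) x)
    (hu'' : ∀ x ∈ Icc (0:ℝ) 1, HasDerivAt u' (u'' x) x)
    (hv' : ∀ x ∈ Icc (0:ℝ) 1, HasDerivAt v (v' x) x)
    (hv'' : ∀ x ∈ Icc (0:ℝ) 1, HasDerivAt v' (v'' x) x)
    (hu''c : ContinuousOn u'' (Icc 0 1)) (hv''c : ContinuousOn v'' (Icc 0 1))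
    (heq₁ : ∀ x ∈ Ioo (0:ℝ) 1, -ε ^ 2 * u'' x + a₁₁ x * u x + a₁₂ x * v x = f x)
    (heq₂ : ∀ x ∈ Ioo (0:ℝ) 1, -μ ^ 2 * v'' x + a₂₁ x * u x + a₂₂ x * v x = g x)
    (hu0 : u 0 = 0) (hu1 : u 1 = 0) (hv0 : v 0 = 0) (hv1 : v 1 = 0) :
    ε ^ 2 * (∫ x in (0:ℝ)..1, (u' x) ^ 2) + μ ^ 2 * (∫ x in (0:ℝ)..1, (v' x) ^ 2) +
      α ^ 2 * ((∫ x in (0:ℝ)..1, (u x) ^ 2) + (∫ x in (0:ℝ)..1, (v x) ^ 2)) ≤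
      (α ^ 2)⁻¹ * ((∫ x in (0:ℝ)..1, (f x) ^ 2) + (∫ x in (0:ℝ)..1, (g x) ^ 2)) := by
  have henergy := energy_le_integral_mul_add_mul zero_le_one
    (fun x hx => hA x (Ioo_subset_Icc_self hx)) hf hg hu' hu'' hv' hv'' hu''c hv''c heq₁ heq₂
    hu0 hu1 hv0 hv1
  have hyoung := two_mul_integral_mul_add_mul_le zero_le_one (pow_pos hα 2) hf hg
    (HasDerivAt.continuousOn hu') (HasDerivAt.continuousOn hv')
  have hgrad : 0 ≤ ε ^ 2 * (∫ x in (0:ℝ)..1, (u' x) ^ 2) + μ ^ 2 * (∫ x in (0:ℝ)..1, (v' x) ^ 2) :=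
    add_nonneg (mul_nonneg (sq_nonneg ε) (integral_nonneg zero_le_one fun x _ => sq_nonneg _))
      (mul_nonneg (sq_nonneg μ) (integral_nonneg zero_le_one fun x _ => sq_nonneg _))
  linarith

/-- A priori energy estimate for the coupled singularly perturbed
reaction-diffusion system `-ε²u'' + a₁₁u + a₁₂v = f`, `-μ²v'' + a₂₁u + a₂₂v = g`
on `(0,1)` with homogeneous Dirichlet boundary conditions. -/
theorem stmt_0
    (ε μ α : ℝ) (hε : 0 < ε) (hεμ : ε ≤ μ) (hμ : μ ≤ 1) (hα : 0 < α)
    (a₁₁ a₁₂ a₂₁ a₂₂ f g : ℝ → ℝ)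
    (ha₁₁ : ContinuousOn a₁₁ (Icc 0 1)) (ha₁₂ : ContinuousOn a₁₂ (Icc 0 1))
    (ha₂₁ : ContinuousOn a₂₁ (Icc 0 1)) (ha₂₂ : ContinuousOn a₂₂ (Icc 0 1))
    (hf : ContinuousOn f (Icc 0 1)) (hg : ContinuousOn g (Icc 0 1))
    (hA : ∀ x ∈ Icc (0:ℝ) 1, ∀ ξ₁ ξ₂ : ℝ,
      α ^ 2 * (ξ₁ ^ 2 + ξ₂ ^ 2) ≤
        ξ₁ * (a₁₁ x * ξ₁ + a₁₂ x * ξ₂) + ξ₂ * (a₂₁ x * ξ₁ + a₂₂ x * ξ₂))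
    (u v u' v' u'' v'' : ℝ → ℝ)
    (hu' : ∀ x ∈ Icc (0:ℝ) 1, HasDerivAt u (u' x) x)
    (hu'' : ∀ x ∈ Icc (0:ℝ) 1, HasDerivAt u' (u'' x) x)
    (hv' : ∀ x ∈ Icc (0:ℝ) 1, HasDerivAt v (v' x) x)
    (hv'' : ∀ x ∈ Icc (0:ℝ) 1, HasDerivAt v' (v'' x) x)
    (hu''c : ContinuousOn u'' (Icc 0 1)) (hv''c : ContinuousOn v'' (Icc 0 1))
    (heq₁ : ∀ x ∈ Ioo (0:ℝ) 1, -ε ^ 2 * u'' x + a₁₁ x * u x + a₁₂ x * v x = f x)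
    (heq₂ : ∀ x ∈ Ioo (0:ℝ) 1, -μ ^ 2 * v'' x + a₂₁ x * u x + a₂₂ x * v x = g x)
    (hu0 : u 0 = 0) (hu1 : u 1 = 0) (hv0 : v 0 = 0) (hv1 : v 1 = 0) :
    ε ^ 2 * (∫ x in (0:ℝ)..1, (u' x) ^ 2) + μ ^ 2 * (∫ x in (0:ℝ)..1, (v' x) ^ 2) +
      α ^ 2 * ((∫ x in (0:ℝ)..1, (u x) ^ 2) + (∫ x in (0:ℝ)..1, (v x) ^ 2)) ≤
      (α ^ 2)⁻¹ * ((∫ x in (0:ℝ)..1, (f x) ^ 2) + (∫ x in (0:ℝ)..1, (g x) ^ 2)) :=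
  stmt_0_general ε μ α hα a₁₁ a₁₂ a₂₁ a₂₂ f g hf hg hA u v u' v' u'' v'' hu' hu'' hv' hv'' hu''c
    hv''c heq₁ heq₂ hu0 hu1 hv0 hv1
end

section
/- Let f, g, a₁₁, a₁₂, a₂₁, a₂₂ : [0,1] → ℝ be smooth, and suppose there exist constants C_f, γ_f, C_g, γ_g, C_a, γ_a > 0 such that sup_{x∈[0,1]}|f^{(n)}(x)| ≤ C_f γ_f^n n!, sup_{x∈[0,1]}|g^{(n)}(x)| ≤ C_g γ_g^n n!, and sup_{x∈[0,1]}|a_{ij}^{(n)}(x)| ≤ C_a γ_a^n n! for all n ∈ ℕ and i,j ∈ {1,2}. Suppose further there is α > 0 such that ξᵀA(x)ξ ≥ α²‖ξ‖² for all ξ ∈ ℝ² and x ∈ [0,1], where A = (a_{ij}). Then there exist constants C, K > 0, depending only on these data and independent of ε and μ, such that: for all 0 < ε ≤ μ ≤ 1 and all smooth u, v : [0,1] → ℝ satisfying −ε²u'' + a₁₁u + a₁₂v = f and −μ²v'' + a₂₁u + a₂₂v = g on (0,1) with u(0)=u(1)=v(0)=v(1)=0, one has (∫₀¹ |u^{(n)}(x)|²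 dx)^{1/2} + (∫₀¹ |v^{(n)}(x)|² dx)^{1/2} ≤ C K^n max{n, ε^{-1}}^n for every n ∈ ℕ. -/
open Set MeasureTheory intervalIntegral

section Helpers
open Finset

noncomputable def nrm (h : ℝ → ℝ) : ℝ := Real.sqrt (∫ x in (0:ℝ)..1, h x ^ 2)


lemma intsq_nonneg (h : ℝ → ℝ) : 0 ≤ ∫ x in (0:ℝ)..1, h x ^ 2 :=
  intervalIntegral.integral_nonneg zero_le_one (fun _ _ => sq_nonneg _)

lemma nrm_nonneg (h : ℝ → ℝ) : 0 ≤ nrm h := Real.sqrt_nonneg _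

lemma sq_nrm (h : ℝ → ℝ) : nrm h ^ 2 = ∫ x in (0:ℝ)..1, h x ^ 2 :=
  Real.sq_sqrt (intsq_nonneg h)

lemma ae_restrict_Ioo01 {p : ℝ → Prop} (h : ∀ x ∈ Ioo (0:ℝ) 1, p x) :
    ∀ᵐ x ∂((volume : Measure ℝ).restrict (Icc (0:ℝ) 1)), p x := by
  rw [ae_restrict_iff' measurableSet_Icc]
  have h0 : (volume : Measure ℝ) ({0, 1} : Set ℝ) = 0 :=
    Set.Finite.measure_zero (Set.toFinite _) _
  filter_upwards [compl_mem_ae_iff.mpr h0] with x hx hxIcc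
  simp only [mem_compl_iff, mem_insert_iff, mem_singleton_iff, not_or] at hx
  exact h x ⟨lt_of_le_of_ne hxIcc.1 (Ne.symm hx.1), lt_of_le_of_ne hxIcc.2 hx.2⟩

lemma integral_mono_Ioo {F G : ℝ → ℝ} (hF : Continuous F) (hG : Continuous G)
    (h : ∀ x ∈ Ioo (0:ℝ) 1, F x ≤ G x) :
    (∫ x in (0:ℝ)..1, F x) ≤ ∫ x in (0:ℝ)..1, G x :=
  intervalIntegral.integral_mono_ae_restrict zero_le_one (hF.intervalIntegrable 0 1)
    (hG.intervalIntegrable 0 1) (ae_restrict_Ioo01 h)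

lemma integral_congr_Ioo {F G : ℝ → ℝ} (hF : Continuous F) (hG : Continuous G)
    (h : ∀ x ∈ Ioo (0:ℝ) 1, F x = G x) :
    (∫ x in (0:ℝ)..1, F x) = ∫ x in (0:ℝ)..1, G x :=
  le_antisymm (integral_mono_Ioo hF hG fun x hx => (h x hx).le)
    (integral_mono_Ioo hG hF fun x hx => (h x hx).ge)

lemma nrm_mono_Ioo {F G : ℝ → ℝ} (hF : Continuous F) (hG : Continuous G)
    (h : ∀ x ∈ Ioo (0:ℝ) 1, |F x| ≤ G x) : nrm F ≤ nrm G := by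
  apply Real.sqrt_le_sqrt
  apply integral_mono_Ioo (by fun_prop) (by fun_prop)
  intro x hx
  calc F x ^ 2 = |F x| ^ 2 := (sq_abs _).symm
    _ ≤ G x ^ 2 := by
        have := h x hx
        have h0 : (0:ℝ) ≤ |F x| := abs_nonneg _
        nlinarith

lemma integral_CS {F G : ℝ → ℝ} (hF : Continuous F) (hG : Continuous G) :
    (∫ x in (0:ℝ)..1, F x * G x) ≤ nrm F * nrm G := by
  set a := ∫ x in (0:ℝ)..1, G x ^ 2 with ha
  set b := 2 * ∫ x in (0:ℝ)..1, F x * G x with hb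
  set c := ∫ x in (0:ℝ)..1, F x ^ 2 with hc
  have key : ∀ t : ℝ, 0 ≤ a * (t * t) + b * t + c := by
    intro t
    have h1 : (0:ℝ) ≤ ∫ x in (0:ℝ)..1, (F x + t * G x) ^ 2 := intsq_nonneg _
    have h2 : (∫ x in (0:ℝ)..1, (F x + t * G x) ^ 2)
        = c + (∫ x in (0:ℝ)..1, F x * G x) * (2 * t) + a * (t * t) := by
      have expand : ∀ x : ℝ, (F x + t * G x) ^ 2
          = F x ^ 2 + (F x * G x) * (2 * t) + G x ^ 2 * (t * t) := by intro x; ring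
      simp_rw [expand]
      rw [intervalIntegral.integral_add (by apply Continuous.intervalIntegrable; fun_prop)
            (by apply Continuous.intervalIntegrable; fun_prop),
          intervalIntegral.integral_add (by apply Continuous.intervalIntegrable; fun_prop)
            (by apply Continuous.intervalIntegrable; fun_prop),
          intervalIntegral.integral_mul_const, intervalIntegral.integral_mul_const]
    rw [h2] at h1
    rw [hb]
    linarith [h1]
  have hd := discrim_le_zero key
  rw [discrim] at hd
  have ha0 : 0 ≤ a := intsq_nonneg _
  have hc0 : 0 ≤ c := intsq_nonneg _
  have hb2 : b ^ 2 = 4 * (∫ x in (0:ℝ)..1, F x * G x) ^ 2 := by rw [hb]; ring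
  have hsq : (∫ x in (0:ℝ)..1, F x * G x) ^ 2 ≤ c * a := by nlinarith
  calc (∫ x in (0:ℝ)..1, F x * G x) ≤ |∫ x in (0:ℝ)..1, F x * G x| := le_abs_self _
    _ = Real.sqrt ((∫ x in (0:ℝ)..1, F x * G x) ^ 2) := (Real.sqrt_sq_eq_abs _).symm
    _ ≤ Real.sqrt (c * a) := Real.sqrt_le_sqrt hsq
    _ = nrm F * nrm G := by rw [Real.sqrt_mul hc0]; rfl


lemma nrm_le_of_sq_le {F : ℝ → ℝ} {c : ℝ} (hc : 0 ≤ c)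
    (h : nrm F ^ 2 ≤ c ^ 2) : nrm F ≤ c := by
  nlinarith [nrm_nonneg F]

lemma nrm_add_le {F G : ℝ → ℝ} (hF : Continuous F) (hG : Continuous G) :
    nrm (fun x => F x + G x) ≤ nrm F + nrm G := by
  apply nrm_le_of_sq_le (add_nonneg (nrm_nonneg F) (nrm_nonneg G))
  rw [sq_nrm]
  have expand : ∀ x : ℝ, (F x + G x) ^ 2 = F x ^ 2 + G x ^ 2 + 2 * (F x * G x) := by
    intro x; ring
  simp_rw [expand]
  rw [intervalIntegral.integral_add (by apply Continuous.intervalIntegrable; fun_prop)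
        (by apply Continuous.intervalIntegrable; fun_prop),
      intervalIntegral.integral_add (by apply Continuous.intervalIntegrable; fun_prop)
        (by apply Continuous.intervalIntegrable; fun_prop),
      intervalIntegral.integral_const_mul]
  have := integral_CS hF hG
  have e1 := sq_nrm F
  have e2 := sq_nrm G
  nlinarith [this]

lemma nrm_const (c : ℝ) : nrm (fun _ => c) = |c| := by
  unfold nrm
  simp [Real.sqrt_sq_eq_abs]

lemma nrm_const_mul (c : ℝ) (F : ℝ → ℝ) : nrm (fun x => c * F x) = |c| * nrm F := by
  unfold nrm
  have : ∀ x : ℝ, (c * F x) ^ 2 = c ^ 2 * F x ^ 2 := fun x => by ring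
  simp_rw [this]
  rw [intervalIntegral.integral_const_mul, Real.sqrt_mul (sq_nonneg c), Real.sqrt_sq_eq_abs]

lemma nrm_abs (F : ℝ → ℝ) : nrm (fun x => |F x|) = nrm F := by
  unfold nrm; simp_rw [sq_abs]

lemma nrm_sum_le (m : ℕ) (F : ℕ → ℝ → ℝ) (hF : ∀ i, Continuous (F i)) :
    nrm (fun x => ∑ i ∈ range m, F i x) ≤ ∑ i ∈ range m, nrm (F i) := by
  induction m with
  | zero => simp [nrm_const]
  | succ m ih =>
      have hstep : nrm (fun x => ∑ i ∈ range (m+1), F i x)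
          ≤ nrm (fun x => ∑ i ∈ range m, F i x) + nrm (F m) := by
        have : ∀ x : ℝ, ∑ i ∈ range (m+1), F i x
            = (∑ i ∈ range m, F i x) + F m x := fun x => Finset.sum_range_succ _ _
        simp_rw [this]
        exact nrm_add_le (by fun_prop) (hF m)
      rw [Finset.sum_range_succ]
      exact hstep.trans (by gcongr <;> simp)


lemma iterated_two (u : ℝ → ℝ) (m : ℕ) :
    iteratedDeriv (m + 2) u = iteratedDeriv m (iteratedDeriv 2 u) := by
  have h2 : iteratedDeriv 2 u = deriv (deriv u) := by
    rw [show (2:ℕ) = 1 + 1 from rfl, iteratedDeriv_succ', iteratedDeriv_one]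
  rw [show m + 2 = m + 1 + 1 from rfl, iteratedDeriv_succ', iteratedDeriv_succ', h2]

lemma leibniz_abs {a u : ℝ → ℝ} (ha : ContDiff ℝ (⊤ : ℕ∞) a) (hu : ContDiff ℝ (⊤ : ℕ∞) u) (n : ℕ) (x : ℝ) :
    |iteratedDeriv n (fun y => a y * u y) x| ≤
      ∑ k ∈ range (n+1), (n.choose k : ℝ) * |iteratedDeriv k a x| * |iteratedDeriv (n-k) u x| := by
  have h := norm_iteratedFDeriv_mul_le (𝕜 := ℝ) ha hu x (WithTop.coe_le_coe.mpr le_top : (n : WithTop ℕ∞) ≤ ((⊤ : ℕ∞) : WithTop ℕ∞))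
  simpa [norm_iteratedFDeriv_eq_norm_iteratedDeriv, Real.norm_eq_abs] using h

lemma iteratedDeriv_cmul {c : ℝ} {F : ℝ → ℝ} (hF : ContDiff ℝ (⊤ : ℕ∞) F) (n : ℕ) (x : ℝ) :
    iteratedDeriv n (fun y => c * F y) x = c * iteratedDeriv n F x := by
  rw [← iteratedDerivWithin_univ, ← iteratedDerivWithin_univ]
  exact iteratedDerivWithin_const_mul (mem_univ x) uniqueDiffOn_univ c
    (hF.contDiffAt.contDiffWithinAt.of_le (WithTop.coe_le_coe.mpr le_top))

lemma iteratedDeriv_add' {F G : ℝ → ℝ} (hF : ContDiff ℝ (⊤ : ℕ∞) F) (hG : ContDiff ℝ (⊤ : ℕ∞) G)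
    (n : ℕ) (x : ℝ) :
    iteratedDeriv n (fun y => F y + G y) x = iteratedDeriv n F x + iteratedDeriv n G x := by
  rw [← iteratedDerivWithin_univ, ← iteratedDerivWithin_univ, ← iteratedDerivWithin_univ]
  exact iteratedDerivWithin_add (mem_univ x) uniqueDiffOn_univ
    (hF.contDiffAt.contDiffWithinAt.of_le (WithTop.coe_le_coe.mpr le_top)) (hG.contDiffAt.contDiffWithinAt.of_le (WithTop.coe_le_coe.mpr le_top))

lemma iteratedDeriv_sub' {F G : ℝ → ℝ} (hF : ContDiff ℝ (⊤ : ℕ∞) F) (hG : ContDiff ℝ (⊤ : ℕ∞) G)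
    (n : ℕ) (x : ℝ) :
    iteratedDeriv n (fun y => F y - G y) x = iteratedDeriv n F x - iteratedDeriv n G x := by
  rw [← iteratedDerivWithin_univ, ← iteratedDerivWithin_univ, ← iteratedDerivWithin_univ]
  exact iteratedDerivWithin_sub (mem_univ x) uniqueDiffOn_univ
    (hF.contDiffAt.contDiffWithinAt.of_le (WithTop.coe_le_coe.mpr le_top)) (hG.contDiffAt.contDiffWithinAt.of_le (WithTop.coe_le_coe.mpr le_top))



lemma iteratedDeriv_two' (u : ℝ → ℝ) : iteratedDeriv 2 u = deriv (deriv u) := by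
  rw [show (2:ℕ) = 1 + 1 from rfl, iteratedDeriv_succ', iteratedDeriv_one]

lemma cont_deriv {u : ℝ → ℝ} (hu : ContDiff ℝ (⊤ : ℕ∞) u) : Continuous (deriv u) := by
  have := hu.continuous_iteratedDeriv 1 (by simp)
  rwa [iteratedDeriv_one] at this

lemma hasDerivAt_deriv' {u : ℝ → ℝ} (hu : ContDiff ℝ (⊤ : ℕ∞) u) (x : ℝ) :
    HasDerivAt (deriv u) (iteratedDeriv 2 u x) x := by
  have hd1 : Differentiable ℝ (deriv u) := by
    have := hu.differentiable_iteratedDeriv 1 (WithTop.coe_lt_coe.mpr (by simp) : (1 : WithTop ℕ∞) < ((⊤ : ℕ∞) : WithTop ℕ∞))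
    rwa [iteratedDeriv_one] at this
  have := (hd1 x).hasDerivAt
  rwa [show deriv (deriv u) x = iteratedDeriv 2 u x by rw [iteratedDeriv_two']] at this

/-- integration by parts: `∫ u'' u = - ∫ (u')²` for `u(0)=u(1)=0`. -/
lemma ibp_sq {u : ℝ → ℝ} (hu : ContDiff ℝ (⊤ : ℕ∞) u) (hu0 : u 0 = 0) (hu1 : u 1 = 0) :
    (∫ x in (0:ℝ)..1, iteratedDeriv 2 u x * u x)
      = - ∫ x in (0:ℝ)..1, deriv u x ^ 2 := by
  have hcu : Continuous u := hu.continuous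
  have hcu' : Continuous (deriv u) := cont_deriv hu
  have hcu2 : Continuous (iteratedDeriv 2 u) := hu.continuous_iteratedDeriv 2 (WithTop.coe_le_coe.mpr le_top)
  have key := integral_deriv_mul_eq_sub_of_hasDerivAt (a := (0:ℝ)) (b := 1)
    (u := deriv u) (v := u) (u' := iteratedDeriv 2 u) (v' := deriv u)
    hcu'.continuousOn hcu.continuousOn
    (fun x _ => hasDerivAt_deriv' hu x)
    (fun x _ => ((hu.differentiable (by simp)) x).hasDerivAt)
    (hcu2.intervalIntegrable 0 1) (hcu'.intervalIntegrable 0 1)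
  rw [hu0, hu1, mul_zero, mul_zero, sub_zero] at key
  have split : (∫ x in (0:ℝ)..1, (iteratedDeriv 2 u x * u x + deriv u x * deriv u x))
      = (∫ x in (0:ℝ)..1, iteratedDeriv 2 u x * u x)
        + ∫ x in (0:ℝ)..1, deriv u x * deriv u x :=
    intervalIntegral.integral_add ((hcu2.mul hcu).intervalIntegrable 0 1)
      ((hcu'.mul hcu').intervalIntegrable 0 1)
  have hsq : (∫ x in (0:ℝ)..1, deriv u x * deriv u x) = ∫ x in (0:ℝ)..1, deriv u x ^ 2 := by
    simp_rw [← sq]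
  rw [split] at key
  linarith [key, hsq ▸ key]


set_option maxHeartbeats 1000000 in
lemma energy
    (f g a₁₁ a₁₂ a₂₁ a₂₂ u v : ℝ → ℝ) (α ε μ Cf Cg : ℝ)
    (hα : 0 < α) (hCf : 0 < Cf) (hCg : 0 < Cg)
    (hfs : Continuous f) (hgs : Continuous g)
    (ha₁₁ : Continuous a₁₁) (ha₁₂ : Continuous a₁₂)
    (ha₂₁ : Continuous a₂₁) (ha₂₂ : Continuous a₂₂)
    (hu : ContDiff ℝ (⊤ : ℕ∞) u) (hv : ContDiff ℝ (⊤ : ℕ∞) v)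
    (hfb : ∀ x ∈ Icc (0:ℝ) 1, |f x| ≤ Cf) (hgb : ∀ x ∈ Icc (0:ℝ) 1, |g x| ≤ Cg)
    (hA : ∀ x ∈ Icc (0:ℝ) 1, ∀ ξ₁ ξ₂ : ℝ,
      α ^ 2 * (ξ₁ ^ 2 + ξ₂ ^ 2) ≤
        ξ₁ * (a₁₁ x * ξ₁ + a₁₂ x * ξ₂) + ξ₂ * (a₂₁ x * ξ₁ + a₂₂ x * ξ₂))
    (hequ : ∀ x ∈ Ioo (0:ℝ) 1,
      -ε ^ 2 * iteratedDeriv 2 u x + a₁₁ x * u x + a₁₂ x * v x = f x)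
    (heqv : ∀ x ∈ Ioo (0:ℝ) 1,
      -μ ^ 2 * iteratedDeriv 2 v x + a₂₁ x * u x + a₂₂ x * v x = g x)
    (hu0 : u 0 = 0) (hu1 : u 1 = 0) (hv0 : v 0 = 0) (hv1 : v 1 = 0) :
    α ^ 2 * (nrm u ^ 2 + nrm v ^ 2) + ε ^ 2 * nrm (deriv u) ^ 2
      + μ ^ 2 * nrm (deriv v) ^ 2 ≤ Cf * nrm u + Cg * nrm v := by
  have hcu : Continuous u := hu.continuous
  have hcv : Continuous v := hv.continuous
  have hcu' : Continuous (deriv u) := cont_deriv hu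
  have hcv' : Continuous (deriv v) := cont_deriv hv
  have hcu2 : Continuous (iteratedDeriv 2 u) := hu.continuous_iteratedDeriv 2 (WithTop.coe_le_coe.mpr le_top)
  have hcv2 : Continuous (iteratedDeriv 2 v) := hv.continuous_iteratedDeriv 2 (WithTop.coe_le_coe.mpr le_top)
  -- identity for u equation
  have hIdu : (∫ x in (0:ℝ)..1, f x * u x)
      = (-ε^2) * (∫ x in (0:ℝ)..1, iteratedDeriv 2 u x * u x)
        + ∫ x in (0:ℝ)..1, u x * (a₁₁ x * u x + a₁₂ x * v x) := by
    have step1 : (∫ x in (0:ℝ)..1, f x * u x)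
        = ∫ x in (0:ℝ)..1, ((-ε^2) * (iteratedDeriv 2 u x * u x)
            + u x * (a₁₁ x * u x + a₁₂ x * v x)) := by
      apply integral_congr_Ioo (by fun_prop) (by fun_prop)
      intro x hx
      rw [← hequ x hx]; ring
    rw [step1, intervalIntegral.integral_add
        (by apply Continuous.intervalIntegrable; fun_prop)
        (by apply Continuous.intervalIntegrable; fun_prop),
      intervalIntegral.integral_const_mul]
  have hIdv : (∫ x in (0:ℝ)..1, g x * v x)
      = (-μ^2) * (∫ x in (0:ℝ)..1, iteratedDeriv 2 v x * v x)
        + ∫ x in (0:ℝ)..1, v x * (a₂₁ x * u x + a₂₂ x * v x) := by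
    have step1 : (∫ x in (0:ℝ)..1, g x * v x)
        = ∫ x in (0:ℝ)..1, ((-μ^2) * (iteratedDeriv 2 v x * v x)
            + v x * (a₂₁ x * u x + a₂₂ x * v x)) := by
      apply integral_congr_Ioo (by fun_prop) (by fun_prop)
      intro x hx
      rw [← heqv x hx]; ring
    rw [step1, intervalIntegral.integral_add
        (by apply Continuous.intervalIntegrable; fun_prop)
        (by apply Continuous.intervalIntegrable; fun_prop),
      intervalIntegral.integral_const_mul]
  rw [ibp_sq hu hu0 hu1] at hIdu
  rw [ibp_sq hv hv0 hv1] at hIdv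
  -- coercivity
  have hquad : α ^ 2 * ((∫ x in (0:ℝ)..1, u x ^ 2) + (∫ x in (0:ℝ)..1, v x ^ 2))
      ≤ (∫ x in (0:ℝ)..1, u x * (a₁₁ x * u x + a₁₂ x * v x))
        + ∫ x in (0:ℝ)..1, v x * (a₂₁ x * u x + a₂₂ x * v x) := by
    have comb : (∫ x in (0:ℝ)..1, u x * (a₁₁ x * u x + a₁₂ x * v x))
        + (∫ x in (0:ℝ)..1, v x * (a₂₁ x * u x + a₂₂ x * v x))
        = ∫ x in (0:ℝ)..1, (u x * (a₁₁ x * u x + a₁₂ x * v x)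
            + v x * (a₂₁ x * u x + a₂₂ x * v x)) :=
      (intervalIntegral.integral_add
        (by apply Continuous.intervalIntegrable; fun_prop)
        (by apply Continuous.intervalIntegrable; fun_prop)).symm
    have lhs : α ^ 2 * ((∫ x in (0:ℝ)..1, u x ^ 2) + (∫ x in (0:ℝ)..1, v x ^ 2))
        = ∫ x in (0:ℝ)..1, α ^ 2 * (u x ^ 2 + v x ^ 2) := by
      rw [intervalIntegral.integral_const_mul, intervalIntegral.integral_add
        (by apply Continuous.intervalIntegrable; fun_prop)
        (by apply Continuous.intervalIntegrable; fun_prop)]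
    rw [lhs, comb]
    apply integral_mono_Ioo (by fun_prop) (by fun_prop)
    intro x hx
    exact hA x (Ioo_subset_Icc_self hx) (u x) (v x)
  -- upper bounds via Cauchy-Schwarz
  have hfu : (∫ x in (0:ℝ)..1, f x * u x) ≤ Cf * nrm u := by
    calc (∫ x in (0:ℝ)..1, f x * u x) ≤ nrm f * nrm u := integral_CS hfs hcu
      _ ≤ Cf * nrm u := by
          apply mul_le_mul_of_nonneg_right _ (nrm_nonneg u)
          have : nrm f ≤ nrm (fun _ => Cf) := nrm_mono_Ioo hfs (by fun_prop)
            (fun x hx => hfb x (Ioo_subset_Icc_self hx))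
          rwa [nrm_const, abs_of_pos hCf] at this
  have hgv : (∫ x in (0:ℝ)..1, g x * v x) ≤ Cg * nrm v := by
    calc (∫ x in (0:ℝ)..1, g x * v x) ≤ nrm g * nrm v := integral_CS hgs hcv
      _ ≤ Cg * nrm v := by
          apply mul_le_mul_of_nonneg_right _ (nrm_nonneg v)
          have : nrm g ≤ nrm (fun _ => Cg) := nrm_mono_Ioo hgs (by fun_prop)
            (fun x hx => hgb x (Ioo_subset_Icc_self hx))
          rwa [nrm_const, abs_of_pos hCg] at this
  have e1 := sq_nrm u; have e2 := sq_nrm v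
  have e3 := sq_nrm (deriv u); have e4 := sq_nrm (deriv v)
  nlinarith [hIdu, hIdv, hquad, hfu, hgv]


set_option maxHeartbeats 1000000 in
/-- One induction step: from the equation `δ² w'' = a w + b z - h` on `(0,1)`,
an `L²` bound on the `(m+2)`-th derivative of `w`. -/
lemma step_bound (a b h w z : ℝ → ℝ) (δ Cc γc Ch γh : ℝ) (m : ℕ)
    (ha : ContDiff ℝ (⊤ : ℕ∞) a) (hb : ContDiff ℝ (⊤ : ℕ∞) b) (hh : ContDiff ℝ (⊤ : ℕ∞) h)
    (hw : ContDiff ℝ (⊤ : ℕ∞) w) (hz : ContDiff ℝ (⊤ : ℕ∞) z)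
    (hCc : 0 < Cc) (hγc : 0 < γc) (hCh : 0 < Ch) (hγh : 0 < γh) (hδ : 0 < δ)
    (hab : ∀ k : ℕ, ∀ x ∈ Icc (0:ℝ) 1, |iteratedDeriv k a x| ≤ Cc * γc ^ k * k.factorial)
    (hbb : ∀ k : ℕ, ∀ x ∈ Icc (0:ℝ) 1, |iteratedDeriv k b x| ≤ Cc * γc ^ k * k.factorial)
    (hhb : ∀ x ∈ Icc (0:ℝ) 1, |iteratedDeriv m h x| ≤ Ch * γh ^ m * m.factorial)
    (heq : ∀ x ∈ Ioo (0:ℝ) 1,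
      iteratedDeriv 2 w x = δ⁻¹ ^ 2 * (a x * w x + b x * z x - h x)) :
    nrm (iteratedDeriv (m+2) w) ≤ δ⁻¹ ^ 2 *
      ((∑ k ∈ range (m+1), (m.choose k : ℝ) * Cc * γc ^ k * k.factorial *
          (nrm (iteratedDeriv (m-k) w) + nrm (iteratedDeriv (m-k) z)))
        + Ch * γh ^ m * m.factorial) := by
  have hcw : ∀ j : ℕ, Continuous (iteratedDeriv j w) :=
    fun j => hw.continuous_iteratedDeriv j (by exact_mod_cast le_top)
  have hcz : ∀ j : ℕ, Continuous (iteratedDeriv j z) :=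
    fun j => hz.continuous_iteratedDeriv j (by exact_mod_cast le_top)
  set c : ℕ → ℝ := fun k => (m.choose k : ℝ) * Cc * γc ^ k * k.factorial with hc
  have hcnn : ∀ k, 0 ≤ c k := fun k => by positivity
  -- the pointwise bounding function
  set G : ℝ → ℝ := fun x => δ⁻¹ ^ 2 *
      ((∑ k ∈ range (m+1), c k * (|iteratedDeriv (m-k) w x| + |iteratedDeriv (m-k) z x|))
        + Ch * γh ^ m * m.factorial) with hG
  have hGcont : Continuous G := by
    apply continuous_const.mul
    apply Continuous.add _ continuous_const
    apply continuous_finset_sum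
    intro k _
    exact continuous_const.mul (((hcw (m-k)).abs).add ((hcz (m-k)).abs))
  -- P := a*w + b*z - h, with ContDiff ⊤
  have hP : ContDiff ℝ (⊤ : ℕ∞) (fun x => a x * w x + b x * z x - h x) :=
    ((ha.mul hw).add (hb.mul hz)).sub hh
  have hW : ContDiff ℝ (⊤ : ℕ∞) (fun x => δ⁻¹ ^ 2 * (a x * w x + b x * z x - h x)) :=
    contDiff_const.mul hP
  -- pointwise estimate on Ioo
  have hpoint : ∀ x ∈ Ioo (0:ℝ) 1, |iteratedDeriv (m+2) w x| ≤ G x := by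
    intro x hx
    have hxI : x ∈ Icc (0:ℝ) 1 := Ioo_subset_Icc_self hx
    have hloc : iteratedDeriv (m+2) w x
        = iteratedDeriv m (fun y => δ⁻¹ ^ 2 * (a y * w y + b y * z y - h y)) x := by
      rw [iterated_two]
      exact Set.EqOn.iteratedDeriv_of_isOpen (fun y hy => heq y hy) isOpen_Ioo m hx
    rw [hloc, iteratedDeriv_cmul hP m x]
    rw [abs_mul, abs_of_nonneg (by positivity : (0:ℝ) ≤ δ⁻¹ ^ 2)]
    rw [hG]
    apply mul_le_mul_of_nonneg_left _ (by positivity : (0:ℝ) ≤ δ⁻¹ ^ 2)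
    -- split the derivative of the sum
    have hsplit : iteratedDeriv m (fun y => a y * w y + b y * z y - h y) x
        = iteratedDeriv m (fun y => a y * w y) x + iteratedDeriv m (fun y => b y * z y) x
          - iteratedDeriv m h x := by
      rw [iteratedDeriv_sub' ((ha.mul hw).add (hb.mul hz)) hh,
        iteratedDeriv_add' (ha.mul hw) (hb.mul hz)]
    rw [hsplit]
    have tri : |iteratedDeriv m (fun y => a y * w y) x + iteratedDeriv m (fun y => b y * z y) x
          - iteratedDeriv m h x|
        ≤ |iteratedDeriv m (fun y => a y * w y) x| + |iteratedDeriv m (fun y => b y * z y) x|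
          + |iteratedDeriv m h x| := by
      calc _ ≤ |iteratedDeriv m (fun y => a y * w y) x + iteratedDeriv m (fun y => b y * z y) x|
            + |iteratedDeriv m h x| := abs_sub _ _
        _ ≤ _ := by gcongr; exact abs_add_le _ _
    refine tri.trans ?_
    have bnd1 : |iteratedDeriv m (fun y => a y * w y) x|
        ≤ ∑ k ∈ range (m+1), c k * |iteratedDeriv (m-k) w x| := by
      refine (leibniz_abs ha hw m x).trans (Finset.sum_le_sum fun k _ => ?_)
      have := hab k x hxI
      have h0 : (0:ℝ) ≤ |iteratedDeriv (m-k) w x| := abs_nonneg _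
      have h1 : (0:ℝ) ≤ (m.choose k : ℝ) := by positivity
      calc (m.choose k : ℝ) * |iteratedDeriv k a x| * |iteratedDeriv (m-k) w x|
          ≤ (m.choose k : ℝ) * (Cc * γc ^ k * k.factorial) * |iteratedDeriv (m-k) w x| := by
            apply mul_le_mul_of_nonneg_right _ h0
            exact mul_le_mul_of_nonneg_left this h1
        _ = c k * |iteratedDeriv (m-k) w x| := by rw [hc]; ring_nf
    have bnd2 : |iteratedDeriv m (fun y => b y * z y) x|
        ≤ ∑ k ∈ range (m+1), c k * |iteratedDeriv (m-k) z x| := by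
      refine (leibniz_abs hb hz m x).trans (Finset.sum_le_sum fun k _ => ?_)
      have := hbb k x hxI
      have h0 : (0:ℝ) ≤ |iteratedDeriv (m-k) z x| := abs_nonneg _
      have h1 : (0:ℝ) ≤ (m.choose k : ℝ) := by positivity
      calc (m.choose k : ℝ) * |iteratedDeriv k b x| * |iteratedDeriv (m-k) z x|
          ≤ (m.choose k : ℝ) * (Cc * γc ^ k * k.factorial) * |iteratedDeriv (m-k) z x| := by
            apply mul_le_mul_of_nonneg_right _ h0
            exact mul_le_mul_of_nonneg_left this h1
        _ = c k * |iteratedDeriv (m-k) z x| := by rw [hc]; ring_nf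
    have bnd3 : |iteratedDeriv m h x| ≤ Ch * γh ^ m * m.factorial := hhb x hxI
    have merge : (∑ k ∈ range (m+1), c k * |iteratedDeriv (m-k) w x|)
        + (∑ k ∈ range (m+1), c k * |iteratedDeriv (m-k) z x|)
        = ∑ k ∈ range (m+1), c k * (|iteratedDeriv (m-k) w x| + |iteratedDeriv (m-k) z x|) := by
      rw [← Finset.sum_add_distrib]
      congr 1; funext k; ring
    linarith [bnd1, bnd2, bnd3]
  -- now take nrm
  have h1 : nrm (iteratedDeriv (m+2) w) ≤ nrm G := nrm_mono_Ioo (hcw (m+2)) hGcont hpoint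
  refine h1.trans ?_
  rw [hG]
  have e1 : nrm (fun x => δ⁻¹ ^ 2 *
      ((∑ k ∈ range (m+1), c k * (|iteratedDeriv (m-k) w x| + |iteratedDeriv (m-k) z x|))
        + Ch * γh ^ m * m.factorial))
      = δ⁻¹ ^ 2 * nrm (fun x =>
        (∑ k ∈ range (m+1), c k * (|iteratedDeriv (m-k) w x| + |iteratedDeriv (m-k) z x|))
        + Ch * γh ^ m * m.factorial) := by
    rw [nrm_const_mul, abs_of_nonneg (by positivity : (0:ℝ) ≤ δ⁻¹ ^ 2)]
  rw [e1]
  apply mul_le_mul_of_nonneg_left _ (by positivity : (0:ℝ) ≤ δ⁻¹ ^ 2)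
  have hsumcont : Continuous (fun x =>
      ∑ k ∈ range (m+1), c k * (|iteratedDeriv (m-k) w x| + |iteratedDeriv (m-k) z x|)) := by
    apply continuous_finset_sum
    intro k _
    exact continuous_const.mul (((hcw (m-k)).abs).add ((hcz (m-k)).abs))
  refine (nrm_add_le hsumcont continuous_const).trans ?_
  rw [nrm_const, abs_of_nonneg (by positivity : (0:ℝ) ≤ Ch * γh ^ m * (m.factorial:ℝ))]
  gcongr
  refine (nrm_sum_le (m+1) (fun k x => c k *
      (|iteratedDeriv (m-k) w x| + |iteratedDeriv (m-k) z x|))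
      (fun k => continuous_const.mul (((hcw (m-k)).abs).add ((hcz (m-k)).abs)))).trans ?_
  apply Finset.sum_le_sum
  intro k _
  have e2 : nrm (fun x => c k * (|iteratedDeriv (m-k) w x| + |iteratedDeriv (m-k) z x|))
      = c k * nrm (fun x => |iteratedDeriv (m-k) w x| + |iteratedDeriv (m-k) z x|) := by
    rw [nrm_const_mul, abs_of_nonneg (hcnn k)]
  rw [e2]
  have e3 : nrm (fun x => |iteratedDeriv (m-k) w x| + |iteratedDeriv (m-k) z x|)
      ≤ nrm (iteratedDeriv (m-k) w) + nrm (iteratedDeriv (m-k) z) := by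
    refine (nrm_add_le ((hcw (m-k)).abs) ((hcz (m-k)).abs)).trans ?_
    rw [nrm_abs, nrm_abs]
  calc c k * nrm (fun x => |iteratedDeriv (m-k) w x| + |iteratedDeriv (m-k) z x|)
      ≤ c k * (nrm (iteratedDeriv (m-k) w) + nrm (iteratedDeriv (m-k) z)) :=
        mul_le_mul_of_nonneg_left e3 (hcnn k)
    _ = (m.choose k : ℝ) * Cc * γc ^ k * k.factorial *
        (nrm (iteratedDeriv (m-k) w) + nrm (iteratedDeriv (m-k) z)) := by rw [hc]


lemma choose_factorial_le {m k : ℕ} (hk : k ≤ m) {M : ℝ} (hm : (m:ℝ) ≤ M) (hM0 : 0 ≤ M) :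
    (m.choose k : ℝ) * k.factorial ≤ M ^ k := by
  have h1 : (m.choose k) * k.factorial ≤ m ^ k := by
    rw [mul_comm, ← Nat.descFactorial_eq_factorial_mul_choose]
    exact Nat.descFactorial_le_pow _ _
  have h2 : ((m.choose k : ℝ)) * (k.factorial : ℝ) ≤ (m:ℝ) ^ k := by exact_mod_cast h1
  exact h2.trans (pow_le_pow_left₀ (Nat.cast_nonneg m) hm k)

lemma sum_numeric (Cc γc C K M : ℝ) (m : ℕ)
    (hCc : 0 < Cc) (hγc : 0 < γc) (hC : 0 < C) (hK1 : 1 ≤ K) (h2γ : 2 * γc ≤ K)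
    (hM1 : 1 ≤ M) (hMm : (m:ℝ) ≤ M) (S : ℕ → ℝ)
    (hS : ∀ k ∈ range (m+1), S (m-k) ≤ C * K ^ (m-k) * M ^ (m-k)) :
    (∑ k ∈ range (m+1), (m.choose k : ℝ) * Cc * γc ^ k * k.factorial * S (m-k))
      ≤ 2 * Cc * C * K ^ m * M ^ m := by
  have hK0 : (0:ℝ) < K := lt_of_lt_of_le one_pos hK1
  have hM0 : (0:ℝ) < M := lt_of_lt_of_le one_pos hM1
  have step : ∀ k ∈ range (m+1),
      (m.choose k : ℝ) * Cc * γc ^ k * k.factorial * S (m-k)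
        ≤ (Cc * C * K ^ m * M ^ m) * (1/2) ^ k := by
    intro k hk
    have hkm : k ≤ m := Nat.lt_succ_iff.mp (mem_range.mp hk)
    have hco : (0:ℝ) ≤ (m.choose k : ℝ) * Cc * γc ^ k * k.factorial := by positivity
    have t1 : (m.choose k : ℝ) * Cc * γc ^ k * k.factorial * S (m-k)
        ≤ (m.choose k : ℝ) * Cc * γc ^ k * k.factorial * (C * K ^ (m-k) * M ^ (m-k)) :=
      mul_le_mul_of_nonneg_left (hS k hk) hco
    refine t1.trans ?_
    have t2 : (m.choose k : ℝ) * (k.factorial : ℝ) ≤ M ^ k :=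
      choose_factorial_le hkm hMm hM0.le
    have t3 : γc ^ k * K ^ (m-k) ≤ (1/2) ^ k * K ^ m := by
      have : γc ^ k ≤ (K/2) ^ k := pow_le_pow_left₀ hγc.le (by linarith) k
      calc γc ^ k * K ^ (m-k) ≤ (K/2) ^ k * K ^ (m-k) := by
            apply mul_le_mul_of_nonneg_right this (by positivity)
        _ = (1/2) ^ k * (K ^ k * K ^ (m-k)) := by rw [div_pow, div_pow]; ring
        _ = (1/2) ^ k * K ^ m := by rw [← pow_add, Nat.add_sub_cancel' hkm]
    have t4 : M ^ k * M ^ (m-k) = M ^ m := by rw [← pow_add, Nat.add_sub_cancel' hkm]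
    calc (m.choose k : ℝ) * Cc * γc ^ k * k.factorial * (C * K ^ (m-k) * M ^ (m-k))
        = ((m.choose k : ℝ) * (k.factorial : ℝ)) * (γc ^ k * K ^ (m-k)) * (C * Cc * M ^ (m-k))
          := by ring
      _ ≤ (M ^ k) * ((1/2) ^ k * K ^ m) * (C * Cc * M ^ (m-k)) := by
          apply mul_le_mul_of_nonneg_right _ (by positivity)
          apply mul_le_mul t2 t3 (by positivity) (by positivity)
      _ = (Cc * C * K ^ m * (M ^ k * M ^ (m-k))) * (1/2) ^ k := by ring
      _ = (Cc * C * K ^ m * M ^ m) * (1/2) ^ k := by rw [t4]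
  calc (∑ k ∈ range (m+1), (m.choose k : ℝ) * Cc * γc ^ k * k.factorial * S (m-k))
      ≤ ∑ k ∈ range (m+1), (Cc * C * K ^ m * M ^ m) * (1/2) ^ k := Finset.sum_le_sum step
    _ = (Cc * C * K ^ m * M ^ m) * ∑ k ∈ range (m+1), (1/2:ℝ) ^ k := by rw [Finset.mul_sum]
    _ ≤ (Cc * C * K ^ m * M ^ m) * 2 := by
        apply mul_le_mul_of_nonneg_left (sum_geometric_two_le _) (by positivity)
    _ = 2 * Cc * C * K ^ m * M ^ m := by ring

end Helpers



lemma quad_key {α Cf Cg nu nv : ℝ}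
    (hnu : 0 ≤ nu) (hnv : 0 ≤ nv) (hCf : 0 < Cf) (hCg : 0 < Cg)
    (hstep0 : α ^ 2 * (nu ^ 2 + nv ^ 2) ≤ Cf * nu + Cg * nv) :
    α ^ 2 * (nu + nv) ^ 2 ≤ 2 * (Cf + Cg) * (nu + nv) := by
  nlinarith [hstep0, sq_nonneg (α * (nu - nv)), mul_nonneg hCf.le hnv,
    mul_nonneg hCg.le hnu, sq_nonneg (nu - nv)]

lemma const_key {Ca Cf Cg C K : ℝ} (hCa : 0 ≤ Ca) (hC : 0 < C)
    (hKsq : 8 * Ca + 2 ≤ K ^ 2) (hCfg : 2 * (Cf + Cg) ≤ C) :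
    4 * Ca * C + Cf + Cg ≤ C * K ^ 2 := by
  have p1 : 0 ≤ (K ^ 2 - (8 * Ca + 2)) * C := mul_nonneg (by linarith) hC.le
  have p2 : 0 ≤ Ca * C := mul_nonneg hCa hC.le
  nlinarith [p1, p2, hCfg, hC.le]


set_option maxHeartbeats 4000000 in
/-- Regularity (Theorem 3.1 / `thm:case-I`): for analytic data and a pointwise
positive definite coefficient matrix, the solution of the coupled singularly
perturbed system satisfies `‖u⁽ⁿ⁾‖_{L²} + ‖v⁽ⁿ⁾‖_{L²} ≤ C Kⁿ max{n, ε⁻¹}ⁿ`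
with `C, K` independent of `ε` and `μ`. -/
theorem stmt_2
    (f g a₁₁ a₁₂ a₂₁ a₂₂ : ℝ → ℝ) (α : ℝ) (hα : 0 < α)
    (Cf γf Cg γg Ca γa : ℝ)
    (hCf : 0 < Cf) (hγf : 0 < γf) (hCg : 0 < Cg) (hγg : 0 < γg)
    (hCa : 0 < Ca) (hγa : 0 < γa)
    (hfs : ContDiff ℝ (⊤ : ℕ∞) f) (hgs : ContDiff ℝ (⊤ : ℕ∞) g)
    (ha₁₁s : ContDiff ℝ (⊤ : ℕ∞) a₁₁) (ha₁₂s : ContDiff ℝ (⊤ : ℕ∞) a₁₂)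
    (ha₂₁s : ContDiff ℝ (⊤ : ℕ∞) a₂₁) (ha₂₂s : ContDiff ℝ (⊤ : ℕ∞) a₂₂)
    (hfb : ∀ n : ℕ, ∀ x ∈ Icc (0:ℝ) 1, |iteratedDeriv n f x| ≤ Cf * γf ^ n * n.factorial)
    (hgb : ∀ n : ℕ, ∀ x ∈ Icc (0:ℝ) 1, |iteratedDeriv n g x| ≤ Cg * γg ^ n * n.factorial)
    (ha₁₁b : ∀ n : ℕ, ∀ x ∈ Icc (0:ℝ) 1, |iteratedDeriv n a₁₁ x| ≤ Ca * γa ^ n * n.factorial)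
    (ha₁₂b : ∀ n : ℕ, ∀ x ∈ Icc (0:ℝ) 1, |iteratedDeriv n a₁₂ x| ≤ Ca * γa ^ n * n.factorial)
    (ha₂₁b : ∀ n : ℕ, ∀ x ∈ Icc (0:ℝ) 1, |iteratedDeriv n a₂₁ x| ≤ Ca * γa ^ n * n.factorial)
    (ha₂₂b : ∀ n : ℕ, ∀ x ∈ Icc (0:ℝ) 1, |iteratedDeriv n a₂₂ x| ≤ Ca * γa ^ n * n.factorial)
    (hA : ∀ x ∈ Icc (0:ℝ) 1, ∀ ξ₁ ξ₂ : ℝ,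
      α ^ 2 * (ξ₁ ^ 2 + ξ₂ ^ 2) ≤
        ξ₁ * (a₁₁ x * ξ₁ + a₁₂ x * ξ₂) + ξ₂ * (a₂₁ x * ξ₁ + a₂₂ x * ξ₂)) :
    ∃ C K : ℝ, 0 < C ∧ 0 < K ∧
      ∀ ε μ : ℝ, 0 < ε → ε ≤ μ → μ ≤ 1 →
      ∀ u v : ℝ → ℝ, ContDiff ℝ (⊤ : ℕ∞) u → ContDiff ℝ (⊤ : ℕ∞) v →
      (∀ x ∈ Ioo (0:ℝ) 1,
        -ε ^ 2 * iteratedDeriv 2 u x + a₁₁ x * u x + a₁₂ x * v x = f x) →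
      (∀ x ∈ Ioo (0:ℝ) 1,
        -μ ^ 2 * iteratedDeriv 2 v x + a₂₁ x * u x + a₂₂ x * v x = g x) →
      u 0 = 0 → u 1 = 0 → v 0 = 0 → v 1 = 0 →
      ∀ n : ℕ,
        Real.sqrt (∫ x in (0:ℝ)..1, (iteratedDeriv n u x) ^ 2) +
          Real.sqrt (∫ x in (0:ℝ)..1, (iteratedDeriv n v x) ^ 2) ≤
          C * K ^ n * (max (n : ℝ) ε⁻¹) ^ n := by
  set E0 : ℝ := (Cf + Cg) / α ^ 2 + 1 with hE0
  clear_value E0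
  have hE0pos : 0 < E0 := by rw [hE0]; positivity
  set K : ℝ := 1 + 2 * γa + γf + γg + Real.sqrt (8 * Ca + 2) with hKdef
  clear_value K
  have hsq0 : 0 ≤ Real.sqrt (8 * Ca + 2) := Real.sqrt_nonneg _
  have hK1 : 1 ≤ K := by rw [hKdef]; linarith [hγa.le, hγf.le, hγg.le, hsq0]
  have hKpos : 0 < K := lt_of_lt_of_le one_pos hK1
  have hKγa : 2 * γa ≤ K := by rw [hKdef]; linarith [hγf.le, hγg.le, hsq0]
  have hKγf : γf ≤ K := by rw [hKdef]; linarith [hγa.le, hγg.le, hsq0]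
  have hKγg : γg ≤ K := by rw [hKdef]; linarith [hγa.le, hγf.le, hsq0]
  have hKsq : 8 * Ca + 2 ≤ K ^ 2 := by
    have h1 : Real.sqrt (8 * Ca + 2) ≤ K := by
      rw [hKdef]; linarith [hγa.le, hγf.le, hγg.le]
    calc 8 * Ca + 2 = Real.sqrt (8 * Ca + 2) ^ 2 := (Real.sq_sqrt (by positivity)).symm
      _ ≤ K ^ 2 := by apply pow_le_pow_left₀ hsq0 h1
  set C : ℝ := 2 * E0 + 4 * α * E0 + 2 * (Cf + Cg) + 1 with hCdef
  clear_value C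
  have hCpos : 0 < C := by rw [hCdef]; positivity
  have hαE0 : 0 ≤ α * E0 := mul_nonneg hα.le hE0pos.le
  have hC2E0 : 2 * E0 ≤ C := by rw [hCdef]; linarith [hαE0, hCf.le, hCg.le]
  have hC4αE0 : 4 * α * E0 ≤ C := by rw [hCdef]; linarith [hE0pos.le, hCf.le, hCg.le]
  have hCfg : 2 * (Cf + Cg) ≤ C := by rw [hCdef]; linarith [hαE0, hE0pos.le]
  refine ⟨C, K, hCpos, hKpos, ?_⟩
  intro ε μ hε hεμ hμ1 u v hu hv hequ heqv hu0 hu1 hv0 hv1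
  have hμpos : 0 < μ := lt_of_lt_of_le hε hεμ
  have hε1 : ε ≤ 1 := hεμ.trans hμ1
  have hεinv0 : 0 < ε⁻¹ := by positivity
  have hεinv1 : 1 ≤ ε⁻¹ := by
    rw [← one_div]; exact one_le_one_div hε hε1
  have hμinv : μ⁻¹ ≤ ε⁻¹ := by
    apply inv_anti₀ hε hεμ
  -- continuity
  have hcu : ∀ j : ℕ, Continuous (iteratedDeriv j u) :=
    fun j => hu.continuous_iteratedDeriv j (by exact_mod_cast le_top)
  have hcv : ∀ j : ℕ, Continuous (iteratedDeriv j v) :=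
    fun j => hv.continuous_iteratedDeriv j (by exact_mod_cast le_top)
  -- energy estimate
  have hfb' : ∀ x ∈ Icc (0:ℝ) 1, |f x| ≤ Cf := fun x hx => by simpa using hfb 0 x hx
  have hgb' : ∀ x ∈ Icc (0:ℝ) 1, |g x| ≤ Cg := fun x hx => by simpa using hgb 0 x hx
  have EN := energy f g a₁₁ a₁₂ a₂₁ a₂₂ u v α ε μ Cf Cg hα hCf hCg
    hfs.continuous hgs.continuous ha₁₁s.continuous ha₁₂s.continuous
    ha₂₁s.continuous ha₂₂s.continuous hu hv hfb' hgb' hA hequ heqv hu0 hu1 hv0 hv1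
  have hnu := nrm_nonneg u
  have hnv := nrm_nonneg v
  have hndu := nrm_nonneg (deriv u)
  have hndv := nrm_nonneg (deriv v)
  have hstep0 : α ^ 2 * (nrm u ^ 2 + nrm v ^ 2) ≤ Cf * nrm u + Cg * nrm v := by
    have p1 : 0 ≤ ε ^ 2 * nrm (deriv u) ^ 2 := by positivity
    have p2 : 0 ≤ μ ^ 2 * nrm (deriv v) ^ 2 := by positivity
    linarith [EN]
  have hsum0 : nrm u + nrm v ≤ 2 * E0 := by
    have key : α ^ 2 * (nrm u + nrm v) ^ 2 ≤ 2 * (Cf + Cg) * (nrm u + nrm v) :=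
      quad_key hnu hnv hCf hCg hstep0
    have h2 : nrm u + nrm v ≤ 2 * (Cf + Cg) / α ^ 2 := by
      rcases (add_nonneg hnu hnv).eq_or_lt with ht | ht
      · rw [← ht]; positivity
      · rw [le_div_iff₀ (by positivity : (0:ℝ) < α ^ 2)]
        have h5 : α ^ 2 * (nrm u + nrm v) * (nrm u + nrm v)
            ≤ 2 * (Cf + Cg) * (nrm u + nrm v) := by linarith [key]
        exact le_of_mul_le_mul_right (by linarith [h5]) ht
    have h3 : 2 * (Cf + Cg) / α ^ 2 ≤ 2 * E0 := by
      have e : 2 * (Cf + Cg) / α ^ 2 = 2 * ((Cf + Cg) / α ^ 2) := by ring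
      rw [e, hE0]; linarith
    linarith
  have hCfCgE0 : Cf * nrm u + Cg * nrm v ≤ 2 * α ^ 2 * E0 ^ 2 := by
    have h1 : Cf * nrm u + Cg * nrm v ≤ (Cf + Cg) * (nrm u + nrm v) := by
      linarith [mul_nonneg hCf.le hnv, mul_nonneg hCg.le hnu]
    have h2 : (Cf + Cg) * (nrm u + nrm v) ≤ (Cf + Cg) * (2 * E0) :=
      mul_le_mul_of_nonneg_left hsum0 (by positivity)
    have e0 : α ^ 2 * ((Cf + Cg) / α ^ 2) = Cf + Cg := by field_simp
    have h3 : Cf + Cg ≤ α ^ 2 * E0 := by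
      have h4 : α ^ 2 * E0 = α ^ 2 * ((Cf + Cg) / α ^ 2) + α ^ 2 := by rw [hE0]; ring
      rw [h4, e0]; linarith [sq_nonneg α]
    have h5 : (Cf + Cg) * (2 * E0) ≤ (α ^ 2 * E0) * (2 * E0) :=
      mul_le_mul_of_nonneg_right h3 (by positivity)
    have h6 : (α ^ 2 * E0) * (2 * E0) = 2 * α ^ 2 * E0 ^ 2 := by ring
    linarith
  have hbu1 : nrm (deriv u) ≤ 2 * α * E0 * ε⁻¹ := by
    apply nrm_le_of_sq_le (by positivity)
    have h1 : ε ^ 2 * nrm (deriv u) ^ 2 ≤ 2 * α ^ 2 * E0 ^ 2 := by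
      have p1 : 0 ≤ μ ^ 2 * nrm (deriv v) ^ 2 := by positivity
      have p2 : 0 ≤ α ^ 2 * (nrm u ^ 2 + nrm v ^ 2) := by positivity
      linarith [EN, hCfCgE0]
    have h2 := mul_le_mul_of_nonneg_left h1 (by positivity : (0:ℝ) ≤ ε⁻¹ ^ 2)
    have h3 : ε⁻¹ ^ 2 * (ε ^ 2 * nrm (deriv u) ^ 2) = nrm (deriv u) ^ 2 := by
      field_simp
    rw [h3] at h2
    calc nrm (deriv u) ^ 2 ≤ ε⁻¹ ^ 2 * (2 * α ^ 2 * E0 ^ 2) := h2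
      _ ≤ (2 * α * E0 * ε⁻¹) ^ 2 := by
            have e : (2 * α * E0 * ε⁻¹) ^ 2 = ε⁻¹ ^ 2 * (2 * α ^ 2 * E0 ^ 2)
                + 2 * (α * E0 * ε⁻¹) ^ 2 := by ring
            rw [e]; linarith [sq_nonneg (α * E0 * ε⁻¹)]
  have hbv1 : nrm (deriv v) ≤ 2 * α * E0 * μ⁻¹ := by
    apply nrm_le_of_sq_le (by positivity)
    have h1 : μ ^ 2 * nrm (deriv v) ^ 2 ≤ 2 * α ^ 2 * E0 ^ 2 := by
      have p1 : 0 ≤ ε ^ 2 * nrm (deriv u) ^ 2 := by positivity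
      have p2 : 0 ≤ α ^ 2 * (nrm u ^ 2 + nrm v ^ 2) := by positivity
      linarith [EN, hCfCgE0]
    have h2 := mul_le_mul_of_nonneg_left h1 (by positivity : (0:ℝ) ≤ μ⁻¹ ^ 2)
    have h3 : μ⁻¹ ^ 2 * (μ ^ 2 * nrm (deriv v) ^ 2) = nrm (deriv v) ^ 2 := by
      field_simp
    rw [h3] at h2
    have hμinv0 : 0 < μ⁻¹ := by positivity
    calc nrm (deriv v) ^ 2 ≤ μ⁻¹ ^ 2 * (2 * α ^ 2 * E0 ^ 2) := h2
      _ ≤ (2 * α * E0 * μ⁻¹) ^ 2 := by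
            have e : (2 * α * E0 * μ⁻¹) ^ 2 = μ⁻¹ ^ 2 * (2 * α ^ 2 * E0 ^ 2)
                + 2 * (α * E0 * μ⁻¹) ^ 2 := by ring
            rw [e]; linarith [sq_nonneg (α * E0 * μ⁻¹)]
  -- main induction
  have main : ∀ n : ℕ,
      nrm (iteratedDeriv n u) + nrm (iteratedDeriv n v)
        ≤ C * K ^ n * (max (n : ℝ) ε⁻¹) ^ n := by
    intro n
    induction n using Nat.strong_induction_on with
    | _ n IH =>
      match n with
      | 0 => simpa [iteratedDeriv_zero] using (by linarith : nrm u + nrm v ≤ C)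
      | 1 =>
          rw [iteratedDeriv_one, iteratedDeriv_one]
          have hmax : max ((1:ℕ):ℝ) ε⁻¹ = ε⁻¹ := by
            rw [Nat.cast_one]; exact max_eq_right hεinv1
          rw [hmax, pow_one, pow_one]
          have h1 : nrm (deriv v) ≤ 2 * α * E0 * ε⁻¹ := by
            refine hbv1.trans ?_
            apply mul_le_mul_of_nonneg_left hμinv (by positivity)
          have h2 : 4 * α * E0 * ε⁻¹ ≤ C * K * ε⁻¹ := by
            apply mul_le_mul_of_nonneg_right _ hεinv0.le
            calc 4 * α * E0 ≤ C := hC4αE0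
              _ = C * 1 := (mul_one C).symm
              _ ≤ C * K := mul_le_mul_of_nonneg_left hK1 hCpos.le
          linarith [hbu1]
      | (m + 2) =>
          show nrm (iteratedDeriv (m+2) u) + nrm (iteratedDeriv (m+2) v)
            ≤ C * K ^ (m+2) * (max ((m+2 : ℕ) : ℝ) ε⁻¹) ^ (m+2)
          set M : ℝ := max ((m+2 : ℕ) : ℝ) ε⁻¹ with hMdef
          clear_value M
          have hMεinv : ε⁻¹ ≤ M := by rw [hMdef]; exact le_max_right _ _
          have hM1 : 1 ≤ M := le_trans hεinv1 hMεinv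
          have hM0 : 0 < M := lt_of_lt_of_le one_pos hM1
          have hMm : (m : ℝ) ≤ M := by
            rw [hMdef]
            refine le_trans ?_ (le_max_left _ _)
            exact_mod_cast Nat.le_add_right m 2
          -- rewritten equations
          have hequ' : ∀ x ∈ Ioo (0:ℝ) 1,
              iteratedDeriv 2 u x = ε⁻¹ ^ 2 * (a₁₁ x * u x + a₁₂ x * v x - f x) := by
            intro x hx
            have h := hequ x hx
            have hε2 : (ε:ℝ) ^ 2 ≠ 0 := by positivity
            field_simp
            linarith [h]
          have heqv' : ∀ x ∈ Ioo (0:ℝ) 1,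
              iteratedDeriv 2 v x = μ⁻¹ ^ 2 * (a₂₂ x * v x + a₂₁ x * u x - g x) := by
            intro x hx
            have h := heqv x hx
            have hμ2 : (μ:ℝ) ^ 2 ≠ 0 := by positivity
            field_simp
            linarith [h]
          have Bu := step_bound a₁₁ a₁₂ f u v ε Ca γa Cf γf m
            ha₁₁s ha₁₂s hfs hu hv hCa hγa hCf hγf hε ha₁₁b ha₁₂b (hfb m) hequ'
          have Bv := step_bound a₂₂ a₂₁ g v u μ Ca γa Cg γg m
            ha₂₂s ha₂₁s hgs hv hu hCa hγa hCg hγg hμpos ha₂₂b ha₂₁b (hgb m) heqv'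
          -- IH in usable form
          have IH1 : ∀ k ∈ Finset.range (m+1),
              nrm (iteratedDeriv (m-k) u) + nrm (iteratedDeriv (m-k) v)
                ≤ C * K ^ (m-k) * M ^ (m-k) := by
            intro k hk
            have h := IH (m-k) (by omega)
            refine h.trans ?_
            have h0 : (0:ℝ) ≤ max (((m-k:ℕ)):ℝ) ε⁻¹ := le_trans hεinv0.le (le_max_right _ _)
            have h1 : max (((m-k:ℕ)):ℝ) ε⁻¹ ≤ M := by
              apply max_le _ hMεinv
              refine le_trans ?_ hMm
              exact_mod_cast (by omega : m - k ≤ m)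
            exact mul_le_mul_of_nonneg_left (pow_le_pow_left₀ h0 h1 _) (by positivity)
          have IH2 : ∀ k ∈ Finset.range (m+1),
              nrm (iteratedDeriv (m-k) v) + nrm (iteratedDeriv (m-k) u)
                ≤ C * K ^ (m-k) * M ^ (m-k) := by
            intro k hk
            rw [add_comm]; exact IH1 k hk
          have s1 := sum_numeric Ca γa C K M m hCa hγa hCpos hK1 hKγa hM1 hMm
            (fun j => nrm (iteratedDeriv j u) + nrm (iteratedDeriv j v)) IH1
          have s2 := sum_numeric Ca γa C K M m hCa hγa hCpos hK1 hKγa hM1 hMm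
            (fun j => nrm (iteratedDeriv j v) + nrm (iteratedDeriv j u)) IH2
          -- data terms
          have hfact : ((m.factorial : ℝ)) ≤ M ^ m := by
            calc ((m.factorial : ℝ)) ≤ ((m:ℝ)) ^ m := by exact_mod_cast Nat.factorial_le_pow m
              _ ≤ M ^ m := pow_le_pow_left₀ (Nat.cast_nonneg m) hMm m
          have hfterm : Cf * γf ^ m * (m.factorial : ℝ) ≤ Cf * K ^ m * M ^ m := by
            have h1 : γf ^ m ≤ K ^ m := pow_le_pow_left₀ hγf.le hKγf m
            calc Cf * γf ^ m * (m.factorial : ℝ) ≤ Cf * K ^ m * (m.factorial : ℝ) := by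
                  apply mul_le_mul_of_nonneg_right _ (Nat.cast_nonneg _)
                  exact mul_le_mul_of_nonneg_left h1 hCf.le
              _ ≤ Cf * K ^ m * M ^ m := by
                  apply mul_le_mul_of_nonneg_left hfact (by positivity)
          have hgterm : Cg * γg ^ m * (m.factorial : ℝ) ≤ Cg * K ^ m * M ^ m := by
            have h1 : γg ^ m ≤ K ^ m := pow_le_pow_left₀ hγg.le hKγg m
            calc Cg * γg ^ m * (m.factorial : ℝ) ≤ Cg * K ^ m * (m.factorial : ℝ) := by
                  apply mul_le_mul_of_nonneg_right _ (Nat.cast_nonneg _)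
                  exact mul_le_mul_of_nonneg_left h1 hCg.le
              _ ≤ Cg * K ^ m * M ^ m := by
                  apply mul_le_mul_of_nonneg_left hfact (by positivity)
          -- assemble u bound
          have hBu2 : nrm (iteratedDeriv (m+2) u)
              ≤ ε⁻¹ ^ 2 * ((2 * Ca * C + Cf) * (K ^ m * M ^ m)) := by
            refine Bu.trans ?_
            apply mul_le_mul_of_nonneg_left _ (by positivity)
            calc _ ≤ (2 * Ca * C * K ^ m * M ^ m) + Cf * K ^ m * M ^ m :=
                  add_le_add s1 hfterm
              _ = (2 * Ca * C + Cf) * (K ^ m * M ^ m) := by ring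
          have hBv2 : nrm (iteratedDeriv (m+2) v)
              ≤ ε⁻¹ ^ 2 * ((2 * Ca * C + Cg) * (K ^ m * M ^ m)) := by
            refine Bv.trans ?_
            have hbr : (∑ k ∈ Finset.range (m+1), (m.choose k : ℝ) * Ca * γa ^ k *
                  k.factorial * (nrm (iteratedDeriv (m-k) v) + nrm (iteratedDeriv (m-k) u)))
                + Cg * γg ^ m * (m.factorial : ℝ)
                ≤ (2 * Ca * C + Cg) * (K ^ m * M ^ m) := by
              calc _ ≤ (2 * Ca * C * K ^ m * M ^ m) + Cg * K ^ m * M ^ m :=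
                    add_le_add s2 hgterm
                _ = (2 * Ca * C + Cg) * (K ^ m * M ^ m) := by ring
            calc μ⁻¹ ^ 2 * _ ≤ μ⁻¹ ^ 2 * ((2 * Ca * C + Cg) * (K ^ m * M ^ m)) :=
                  mul_le_mul_of_nonneg_left hbr (by positivity)
              _ ≤ ε⁻¹ ^ 2 * ((2 * Ca * C + Cg) * (K ^ m * M ^ m)) := by
                  apply mul_le_mul_of_nonneg_right _ (by positivity)
                  exact pow_le_pow_left₀ (by positivity) hμinv 2
          -- final arithmetic
          have hεM : ε⁻¹ ^ 2 ≤ M ^ 2 := pow_le_pow_left₀ hεinv0.le hMεinv 2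
          have hconst : 4 * Ca * C + Cf + Cg ≤ C * K ^ 2 :=
            const_key hCa.le hCpos hKsq hCfg
          calc nrm (iteratedDeriv (m+2) u) + nrm (iteratedDeriv (m+2) v)
              ≤ ε⁻¹ ^ 2 * ((4 * Ca * C + Cf + Cg) * (K ^ m * M ^ m)) := by
                have := add_le_add hBu2 hBv2
                refine this.trans (le_of_eq ?_)
                ring
            _ ≤ M ^ 2 * ((4 * Ca * C + Cf + Cg) * (K ^ m * M ^ m)) := by
                apply mul_le_mul_of_nonneg_right hεM (by positivity)
            _ ≤ M ^ 2 * ((C * K ^ 2) * (K ^ m * M ^ m)) := by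
                apply mul_le_mul_of_nonneg_left _ (by positivity)
                apply mul_le_mul_of_nonneg_right hconst (by positivity)
            _ = C * K ^ (m+2) * M ^ (m+2) := by
                rw [pow_add, pow_add]; ring
  intro n
  exact main n
end

section
/- Let α, a, b > 0, let i ∈ ℕ, and let x ≥ 0. Then ∫_x^∞ e^{−αt}(a+bt)^i dt ≤ (1/α)·e^{−αx}·Σ_{ν=0}^{i} (a+bx)^{i−ν}·(ib/α)^ν, and ∫_x^∞ ∫_t^∞ e^{−ατ}(a+bτ)^i dτ dt ≤ (1/α²)·e^{−αx}·Σ_{ν=0}^{i} Σ_{ℓ=0}^{i−ν} (ib/α)^ν·((i−ν)b/α)^ℓ·(a+bx)^{i−ν−ℓ}. -/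
/-!
Integrating by parts, `I_i(x) = ∫_x^∞ e^{-αt} (a+bt)^i dt` satisfies
`I_i(x) = e^{-αx} (a+bx)^i / α + (i b / α) I_{i-1}(x)`, which unrolls to the exact formula
`I_i(x) = (e^{-αx} / α) Σ_ν i(i-1)⋯(i-ν+1) (b/α)^ν (a+bx)^{i-ν}`.
Since this is a combination of the functions `e^{-αt} (a+bt)^{i-ν}`, integrating it once more
gives an exact double sum for the iterated integral. Both estimates then follow from
`i(i-1)⋯(i-ν+1) ≤ i^ν`.
-/

open Set MeasureTheory Finset Filter Asymptotics Topology

theorem descFactorial_mul_pow_le (n k : ℕ) {r : ℝ} (hr : 0 ≤ r) :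
    (n.descFactorial k : ℝ) * r ^ k ≤ (n * r) ^ k := by
  rw [mul_pow]
  gcongr
  exact_mod_cast Nat.descFactorial_le_pow n k

section

variable {α : ℝ} (a b : ℝ)

theorem isBigO_add_mul_pow_exp_mul_atTop {c : ℝ} (hc : 0 < c) (i : ℕ) :
    (fun t => (a + b * t) ^ i) =O[atTop] fun t => Real.exp (c * t) := by
  simp_rw [add_comm a, add_pow, mul_pow]
  refine IsBigO.fun_sum fun k _ => ?_
  have hk := (isLittleO_pow_exp_pos_mul_atTop k hc).isBigO
  exact (hk.const_mul_left (b ^ k * a ^ (i - k) * (i.choose k))).congr_left fun t => by ring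

theorem isBigO_exp_neg_mul_mul_pow_atTop (hα : 0 < α) (i : ℕ) :
    (fun t => Real.exp (-α * t) * (a + b * t) ^ i) =O[atTop]
      fun t => Real.exp (-(α / 2) * t) := by
  refine ((isBigO_refl (fun t => Real.exp (-α * t)) atTop).mul
    (isBigO_add_mul_pow_exp_mul_atTop a b (half_pos hα) i)).congr_right fun t => ?_
  rw [← Real.exp_add]
  ring_nf

theorem tendsto_exp_neg_mul_mul_pow_atTop (hα : 0 < α) (i : ℕ) :
    Tendsto (fun t => Real.exp (-α * t) * (a + b * t) ^ i) atTop (𝓝 0) :=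
  (isBigO_exp_neg_mul_mul_pow_atTop a b hα i).trans_tendsto <|
    Real.tendsto_exp_atBot.comp <| tendsto_id.const_mul_atTop_of_neg (by linarith)

theorem integrableOn_exp_neg_mul_mul_pow_Ioi (hα : 0 < α) (i : ℕ) (x : ℝ) :
    IntegrableOn (fun t => Real.exp (-α * t) * (a + b * t) ^ i) (Ioi x) :=
  integrable_of_isBigO_exp_neg (half_pos hα) (by fun_prop)
    (isBigO_exp_neg_mul_mul_pow_atTop a b hα i)

theorem hasDerivAt_exp_neg_mul_mul_pow (hα : 0 < α) (i : ℕ) (t : ℝ) :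
    HasDerivAt (fun t => -(1 / α) * (Real.exp (-α * t) * (a + b * t) ^ i))
      (Real.exp (-α * t) * (a + b * t) ^ i
        - i * b / α * (Real.exp (-α * t) * (a + b * t) ^ (i - 1))) t := by
  have hexp := ((hasDerivAt_id t).const_mul (-α)).exp
  have hpow := (((hasDerivAt_id t).const_mul b).const_add a).pow i
  refine ((hexp.mul hpow).const_mul (-(1 / α))).congr_deriv ?_
  simp only [id, mul_one, Pi.pow_apply]
  field_simp
  ring

-- For `i = 0` the coefficient `i * b / α` vanishes, so the truncation `0 - 1 = 0` is harmless.
theorem integral_exp_neg_mul_mul_pow_Ioi (hα : 0 < α) (i : ℕ) (x : ℝ) :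
    ∫ t in Ioi x, Real.exp (-α * t) * (a + b * t) ^ i =
      1 / α * Real.exp (-α * x) * (a + b * x) ^ i
        + i * b / α * ∫ t in Ioi x, Real.exp (-α * t) * (a + b * t) ^ (i - 1) := by
  have hint := integrableOn_exp_neg_mul_mul_pow_Ioi a b hα
  have key := integral_Ioi_of_hasDerivAt_of_tendsto'
    (fun t _ => hasDerivAt_exp_neg_mul_mul_pow a b hα i t)
    ((hint i x).sub ((hint (i - 1) x).const_mul _))
    (by simpa using (tendsto_exp_neg_mul_mul_pow_atTop a b hα i).const_mul (-(1 / α)))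
  rw [integral_sub (hint i x) ((hint (i - 1) x).const_mul _), integral_const_mul] at key
  linear_combination key

theorem integral_exp_neg_mul_mul_pow_Ioi_eq_sum (hα : 0 < α) (i : ℕ) (x : ℝ) :
    ∫ t in Ioi x, Real.exp (-α * t) * (a + b * t) ^ i =
      1 / α * Real.exp (-α * x) *
        ∑ ν ∈ range (i + 1), (a + b * x) ^ (i - ν) * (i.descFactorial ν * (b / α) ^ ν) := by
  induction i with
  | zero => rw [integral_exp_neg_mul_mul_pow_Ioi a b hα 0 x]; simp
  | succ i ih =>
    rw [integral_exp_neg_mul_mul_pow_Ioi a b hα, Nat.add_sub_cancel, ih, sum_range_succ' _ (i + 1)]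
    simp only [Nat.succ_descFactorial_succ, Nat.succ_sub_succ, Nat.descFactorial_zero,
      Nat.sub_zero, pow_zero, Nat.cast_one, mul_one]
    rw [mul_add, add_comm, mul_sum, mul_sum, mul_sum]
    congr 1
    refine sum_congr rfl fun ν _ => ?_
    push_cast
    ring

theorem integral_integral_exp_neg_mul_mul_pow_Ioi_eq_sum (hα : 0 < α) (i : ℕ) (x : ℝ) :
    ∫ t in Ioi x, ∫ τ in Ioi t, Real.exp (-α * τ) * (a + b * τ) ^ i =
      1 / α ^ 2 * Real.exp (-α * x) *
        ∑ ν ∈ range (i + 1), ∑ ℓ ∈ range (i - ν + 1),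
          i.descFactorial ν * (b / α) ^ ν * ((i - ν).descFactorial ℓ * (b / α) ^ ℓ) *
            (a + b * x) ^ (i - ν - ℓ) := by
  set c : ℕ → ℝ := fun ν => 1 / α * (i.descFactorial ν * (b / α) ^ ν)
  calc ∫ t in Ioi x, ∫ τ in Ioi t, Real.exp (-α * τ) * (a + b * τ) ^ i
      = ∫ t in Ioi x, ∑ ν ∈ range (i + 1), c ν * (Real.exp (-α * t) * (a + b * t) ^ (i - ν)) := by
        congr 1 with t
        rw [integral_exp_neg_mul_mul_pow_Ioi_eq_sum a b hα, mul_sum]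
        exact sum_congr rfl fun ν _ => by ring
    _ = ∑ ν ∈ range (i + 1), c ν * ∫ t in Ioi x, Real.exp (-α * t) * (a + b * t) ^ (i - ν) := by
        rw [integral_finsetSum _ fun ν _ =>
          (integrableOn_exp_neg_mul_mul_pow_Ioi a b hα (i - ν) x).const_mul (c ν)]
        simp_rw [integral_const_mul]
    _ = _ := by
        simp_rw [integral_exp_neg_mul_mul_pow_Ioi_eq_sum a b hα, mul_sum]
        refine sum_congr rfl fun ν _ => sum_congr rfl fun ℓ _ => ?_
        ring

theorem integral_exp_neg_mul_mul_pow_Ioi_le (hα : 0 < α) (hb : 0 ≤ b) (i : ℕ) {x : ℝ}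
    (hx : 0 ≤ a + b * x) :
    ∫ t in Ioi x, Real.exp (-α * t) * (a + b * t) ^ i ≤
      1 / α * Real.exp (-α * x) *
        ∑ ν ∈ range (i + 1), (a + b * x) ^ (i - ν) * ((i : ℝ) * b / α) ^ ν := by
  rw [integral_exp_neg_mul_mul_pow_Ioi_eq_sum a b hα]
  gcongr with ν
  rw [mul_div_assoc]
  exact descFactorial_mul_pow_le i ν (by positivity)

theorem integral_integral_exp_neg_mul_mul_pow_Ioi_le (hα : 0 < α) (hb : 0 ≤ b) (i : ℕ) {x : ℝ}
    (hx : 0 ≤ a + b * x) :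
    ∫ t in Ioi x, ∫ τ in Ioi t, Real.exp (-α * τ) * (a + b * τ) ^ i ≤
      1 / α ^ 2 * Real.exp (-α * x) *
        ∑ ν ∈ range (i + 1), ∑ ℓ ∈ range (i - ν + 1),
          ((i : ℝ) * b / α) ^ ν * (((i - ν : ℕ) : ℝ) * b / α) ^ ℓ * (a + b * x) ^ (i - ν - ℓ) := by
  rw [integral_integral_exp_neg_mul_mul_pow_Ioi_eq_sum a b hα]
  have hba : 0 ≤ b / α := by positivity
  gcongr with ν _ ℓ
  · rw [mul_div_assoc]
    exact descFactorial_mul_pow_le i ν hba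
  · rw [mul_div_assoc]
    exact descFactorial_mul_pow_le (i - ν) ℓ hba

end

/-- Elementary estimates for single and iterated integrals of exponentially
decaying functions multiplied by polynomial factors on `[x, ∞)`. -/
theorem stmt_3 (α a b : ℝ) (hα : 0 < α) (ha : 0 < a) (hb : 0 < b)
    (i : ℕ) (x : ℝ) (hx : 0 ≤ x) :
    (∫ t in Ici x, Real.exp (-α * t) * (a + b * t) ^ i) ≤
      (1 / α) * Real.exp (-α * x) *
        ∑ ν ∈ range (i + 1), (a + b * x) ^ (i - ν) * ((i : ℝ) * b / α) ^ ν ∧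
    (∫ t in Ici x, ∫ τ in Ici t, Real.exp (-α * τ) * (a + b * τ) ^ i) ≤
      (1 / α ^ 2) * Real.exp (-α * x) *
        ∑ ν ∈ range (i + 1), ∑ ℓ ∈ range (i - ν + 1),
          ((i : ℝ) * b / α) ^ ν * (((i - ν : ℕ) : ℝ) * b / α) ^ ℓ *
            (a + b * x) ^ (i - ν - ℓ) := by
  have hP : 0 ≤ a + b * x := add_nonneg ha.le (mul_nonneg hb.le hx)
  simp only [integral_Ici_eq_integral_Ioi]
  exact ⟨integral_exp_neg_mul_mul_pow_Ioi_le a b hα hb.le i hP,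
    integral_integral_exp_neg_mul_mul_pow_Ioi_le a b hα hb.le i hP⟩
end

section
/- Let α, a, b > 0, let j ∈ ℕ, let z₀ ∈ ℝ, and let v be holomorphic on the half-plane {z ∈ ℂ : Re z > z₀} with |v(z)| ≤ e^{−α·Re z}(a + b|z|)^j for all such z. Then for every z with Re z > z₀: |∫₀^∞ v(z+t) dt| ≤ (1/α)·e^{−α·Re z}·Σ_{ν=0}^{j} (a+b|z|)^{j−ν}·(jb/α)^ν, and |∫₀^∞ ∫₀^∞ v(z+t+τ) dτ dt| ≤ (1/α²)·e^{−α·Re z}·Σ_{ν=0}^{j} Σ_{ℓ=0}^{j−ν} (jb/α)^ν·((j−ν)b/α)^ℓ·(a+b|z|)^{j−ν−ℓ}. -/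
/-!
Expanding `(A + b t)^n` binomially and integrating termwise against `e^{-α t}` gives
`∫₀^∞ e^{-α t} (A + b t)^n dt = (1/α) Σₖ n!/(n-k)! A^{n-k} (b/α)^k`, and `n!/(n-k)! ≤ n^k`.
Since `|v(z+t)| ≤ e^{-α Re z} e^{-α t} (a + b|z| + b t)^j`, this bounds the single ray integral.
The bound obtained has again the form `e^{-α Re w}` times a polynomial in `a + b|w|` with
nonnegative coefficients, so the same estimate, applied term by term to the inner integral,
bounds the double ray integral.
-/

open Set MeasureTheory Finset

section ExpPolyIntegrals

variable {α A b : ℝ} {ι : Type*}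

lemma integrableOn_pow_mul_exp_neg_mul_Ioi (hα : 0 < α) (n : ℕ) :
    IntegrableOn (fun t : ℝ => t ^ n * Real.exp (-α * t)) (Ioi 0) :=
  (integrableOn_rpow_mul_exp_neg_mul_rpow (s := n) (neg_one_lt_zero.trans_le n.cast_nonneg)
    one_pos hα).congr_fun
    (fun t _ => by simp only [Real.rpow_natCast, Real.rpow_one]) measurableSet_Ioi

lemma integral_pow_mul_exp_neg_mul_Ioi (hα : 0 < α) (n : ℕ) :
    ∫ t in Ioi (0:ℝ), t ^ n * Real.exp (-α * t) = n.factorial / α ^ (n + 1) := by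
  have h := Real.integral_rpow_mul_exp_neg_mul_Ioi (a := n + 1) (by positivity) hα
  rw [add_sub_cancel_right, Real.Gamma_nat_eq_factorial, ← Nat.cast_succ, Real.rpow_natCast,
    one_div_pow, one_div_mul_eq_div] at h
  rw [← h]
  refine setIntegral_congr_fun measurableSet_Ioi fun t _ => ?_
  simp only [Real.rpow_natCast, neg_mul]

lemma exp_neg_mul_mul_add_mul_pow (t : ℝ) (n : ℕ) :
    Real.exp (-α * t) * (A + b * t) ^ n
      = ∑ k ∈ range (n + 1), (n.choose k * A ^ (n - k) * b ^ k) * (t ^ k * Real.exp (-α * t)) := by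
  rw [add_comm, add_pow, mul_sum]
  refine sum_congr rfl fun k _ => ?_
  ring

lemma integrableOn_exp_neg_mul_mul_add_mul_pow_Ioi (hα : 0 < α) (n : ℕ) :
    IntegrableOn (fun t : ℝ => Real.exp (-α * t) * (A + b * t) ^ n) (Ioi 0) := by
  simp_rw [exp_neg_mul_mul_add_mul_pow]
  exact integrable_finsetSum _ fun k _ => (integrableOn_pow_mul_exp_neg_mul_Ioi hα k).const_mul _

lemma integral_exp_neg_mul_mul_add_mul_pow_Ioi (hα : 0 < α) (n : ℕ) :
    ∫ t in Ioi (0:ℝ), Real.exp (-α * t) * (A + b * t) ^ n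
      = (1 / α) * ∑ k ∈ range (n + 1), A ^ (n - k) * (n.descFactorial k * (b / α) ^ k) := by
  simp_rw [exp_neg_mul_mul_add_mul_pow]
  rw [integral_finsetSum _ fun k _ => (integrableOn_pow_mul_exp_neg_mul_Ioi hα k).const_mul _,
    mul_sum]
  refine sum_congr rfl fun k _ => ?_
  rw [integral_const_mul, integral_pow_mul_exp_neg_mul_Ioi hα,
    Nat.descFactorial_eq_factorial_mul_choose, div_pow]
  field_simp
  push_cast
  ring

lemma integral_exp_neg_mul_mul_add_mul_pow_Ioi_le (hα : 0 < α) (hA : 0 ≤ A)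
    (hb : 0 ≤ b) (n : ℕ) :
    ∫ t in Ioi (0:ℝ), Real.exp (-α * t) * (A + b * t) ^ n
      ≤ (1 / α) * ∑ k ∈ range (n + 1), A ^ (n - k) * (n * b / α) ^ k := by
  rw [integral_exp_neg_mul_mul_add_mul_pow_Ioi hα]
  gcongr with k
  rw [mul_div_assoc, mul_pow]
  gcongr
  exact_mod_cast Nat.descFactorial_le_pow n k

lemma integrableOn_exp_neg_mul_mul_sum_pow_Ioi (hα : 0 < α) (A b : ℝ) (s : Finset ι) (c : ι → ℝ) (n : ι → ℕ) :
    IntegrableOn (fun t : ℝ => Real.exp (-α * t) * ∑ i ∈ s, c i * (A + b * t) ^ n i) (Ioi 0) := by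
  simp_rw [mul_sum, mul_left_comm (Real.exp _)]
  exact integrable_finsetSum _ fun i _ =>
    (integrableOn_exp_neg_mul_mul_add_mul_pow_Ioi hα (n i)).const_mul _

lemma integral_exp_neg_mul_mul_sum_pow_Ioi_le (hα : 0 < α) (hA : 0 ≤ A)
    (hb : 0 ≤ b) {s : Finset ι} {c : ι → ℝ} (hc : ∀ i ∈ s, 0 ≤ c i) (n : ι → ℕ) :
    ∫ t in Ioi (0:ℝ), Real.exp (-α * t) * ∑ i ∈ s, c i * (A + b * t) ^ n i
      ≤ ∑ i ∈ s, c i * ((1 / α) * ∑ k ∈ range (n i + 1), A ^ (n i - k) * (n i * b / α) ^ k) := by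
  have hsum (t : ℝ) : Real.exp (-α * t) * ∑ i ∈ s, c i * (A + b * t) ^ n i
      = ∑ i ∈ s, c i * (Real.exp (-α * t) * (A + b * t) ^ n i) := by
    rw [mul_sum]
    exact sum_congr rfl fun i _ => mul_left_comm _ _ _
  simp_rw [hsum]
  rw [integral_finsetSum _ fun i _ =>
    (integrableOn_exp_neg_mul_mul_add_mul_pow_Ioi hα (n i)).const_mul _]
  refine sum_le_sum fun i hi => ?_
  rw [integral_const_mul]
  exact mul_le_mul_of_nonneg_left (integral_exp_neg_mul_mul_add_mul_pow_Ioi_le hα hA hb _) (hc i hi)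

end ExpPolyIntegrals

section HalfPlane

variable {E : Type*} [NormedAddCommGroup E]
  {α a b z₀ : ℝ} {ι : Type*} {s : Finset ι} {c : ι → ℝ} {n : ι → ℕ} {f : ℂ → E}

lemma norm_apply_add_ofReal_le (ha : 0 ≤ a) (hb : 0 ≤ b) (hc : ∀ i ∈ s, 0 ≤ c i)
    (hbd : ∀ w : ℂ, z₀ < w.re →
      ‖f w‖ ≤ Real.exp (-α * w.re) * ∑ i ∈ s, c i * (a + b * ‖w‖) ^ n i)
    {w : ℂ} (hw : z₀ < w.re) {t : ℝ} (ht : 0 ≤ t) :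
    ‖f (w + t)‖ ≤ Real.exp (-α * w.re) *
      (Real.exp (-α * t) * ∑ i ∈ s, c i * (a + b * ‖w‖ + b * t) ^ n i) := by
  have hre : (w + t).re = w.re + t := by simp
  have hnorm : ‖w + t‖ ≤ ‖w‖ + t := by simpa [abs_of_nonneg ht] using norm_add_le w t
  refine (hbd _ (by rw [hre]; linarith)).trans ?_
  rw [← mul_assoc, ← Real.exp_add, hre, mul_add]
  refine mul_le_mul_of_nonneg_left (sum_le_sum fun i hi => ?_) (Real.exp_nonneg _)
  exact mul_le_mul_of_nonneg_left (pow_le_pow_left₀ (by positivity) (by nlinarith) _) (hc i hi)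

variable [NormedSpace ℝ E]

noncomputable def rayIntegral (f : ℂ → E) (z : ℂ) : E := ∫ t in Ioi (0:ℝ), f (z + t)

theorem norm_rayIntegral_le (hα : 0 < α) (ha : 0 ≤ a) (hb : 0 ≤ b)
    (hc : ∀ i ∈ s, 0 ≤ c i)
    (hbd : ∀ w : ℂ, z₀ < w.re →
      ‖f w‖ ≤ Real.exp (-α * w.re) * ∑ i ∈ s, c i * (a + b * ‖w‖) ^ n i)
    {z : ℂ} (hz : z₀ < z.re) :
    ‖rayIntegral f z‖ ≤ Real.exp (-α * z.re) * ∑ i ∈ s, c i *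
      ((1 / α) * ∑ k ∈ range (n i + 1), (a + b * ‖z‖) ^ (n i - k) * (n i * b / α) ^ k) := by
  calc ‖rayIntegral f z‖
      ≤ ∫ t in Ioi (0:ℝ), Real.exp (-α * z.re) *
          (Real.exp (-α * t) * ∑ i ∈ s, c i * (a + b * ‖z‖ + b * t) ^ n i) :=
        -- also valid for a non-integrable integrand, whose integral is `0`
        norm_integral_le_of_norm_le
          ((integrableOn_exp_neg_mul_mul_sum_pow_Ioi hα _ b s c n).const_mul _)
          ((ae_restrict_iff' measurableSet_Ioi).2 <| .of_forall fun t ht =>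
            norm_apply_add_ofReal_le ha hb hc hbd hz (le_of_lt ht))
    _ ≤ _ := by
        rw [integral_const_mul]
        gcongr
        exact integral_exp_neg_mul_mul_sum_pow_Ioi_le hα (by positivity) hb hc n

end HalfPlane

theorem stmt_4_general (α a b : ℝ) (hα : 0 < α) (ha : 0 < a) (hb : 0 < b)
    (j : ℕ) (z₀ : ℝ) (v : ℂ → ℂ)
    (hbd : ∀ z : ℂ, z₀ < z.re →
      ‖v z‖ ≤ Real.exp (-α * z.re) * (a + b * ‖z‖) ^ j) :
    ∀ z : ℂ, z₀ < z.re →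
      (‖∫ t in Ioi (0:ℝ), v (z + (t : ℂ))‖ ≤
        (1 / α) * Real.exp (-α * z.re) *
          ∑ ν ∈ range (j + 1),
            (a + b * ‖z‖) ^ (j - ν) * ((j : ℝ) * b / α) ^ ν) ∧
      (‖∫ t in Ioi (0:ℝ), ∫ τ in Ioi (0:ℝ), v (z + (t : ℂ) + (τ : ℂ))‖ ≤
        (1 / α ^ 2) * Real.exp (-α * z.re) *
          ∑ ν ∈ range (j + 1), ∑ ℓ ∈ range (j - ν + 1),
            ((j : ℝ) * b / α) ^ ν * (((j - ν : ℕ) : ℝ) * b / α) ^ ℓ *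
              (a + b * ‖z‖) ^ (j - ν - ℓ)) := by
  have hbd_sum (w : ℂ) (hw : z₀ < w.re) :
      ‖v w‖ ≤ Real.exp (-α * w.re) * ∑ _i ∈ range 1, 1 * (a + b * ‖w‖) ^ j := by
    simpa using hbd w hw
  have hc : ∀ ν ∈ range (j + 1), 0 ≤ 1 / α * ((j : ℝ) * b / α) ^ ν := fun _ _ => by positivity
  have hray (w : ℂ) (hw : z₀ < w.re) : ‖rayIntegral v w‖ ≤ Real.exp (-α * w.re) *
      ∑ ν ∈ range (j + 1), 1 / α * ((j : ℝ) * b / α) ^ ν * (a + b * ‖w‖) ^ (j - ν) := by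
    refine (norm_rayIntegral_le hα ha.le hb.le (fun _ _ => zero_le_one) hbd_sum hw).trans_eq ?_
    simp only [sum_range_one, one_mul, mul_sum]
    exact sum_congr rfl fun ν _ => by ring
  intro z hz
  constructor
  · refine (hray z hz).trans_eq ?_
    simp only [mul_sum]
    exact sum_congr rfl fun ν _ => by ring
  · show ‖rayIntegral (rayIntegral v) z‖ ≤ _
    refine (norm_rayIntegral_le hα ha.le hb.le hc hray hz).trans_eq ?_
    simp only [mul_sum]
    exact sum_congr rfl fun ν _ => sum_congr rfl fun ℓ _ => by ring

/-- Complex-plane version of the iterated-integral estimates: for `v`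
holomorphic on the half-plane `Re z > z₀` with
`|v(z)| ≤ e^{-α Re z}(a + b|z|)^j`, the integrals along rays parallel to the
positive real axis satisfy the stated bounds. -/
theorem stmt_4 (α a b : ℝ) (hα : 0 < α) (ha : 0 < a) (hb : 0 < b)
    (j : ℕ) (z₀ : ℝ) (v : ℂ → ℂ)
    (hv : DifferentiableOn ℂ v {z : ℂ | z₀ < z.re})
    (hbd : ∀ z : ℂ, z₀ < z.re →
      ‖v z‖ ≤ Real.exp (-α * z.re) * (a + b * ‖z‖) ^ j) :
    ∀ z : ℂ, z₀ < z.re →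
      (‖∫ t in Ioi (0:ℝ), v (z + (t : ℂ))‖ ≤
        (1 / α) * Real.exp (-α * z.re) *
          ∑ ν ∈ range (j + 1),
            (a + b * ‖z‖) ^ (j - ν) * ((j : ℝ) * b / α) ^ ν) ∧
      (‖∫ t in Ioi (0:ℝ), ∫ τ in Ioi (0:ℝ), v (z + (t : ℂ) + (τ : ℂ))‖ ≤
        (1 / α ^ 2) * Real.exp (-α * z.re) *
          ∑ ν ∈ range (j + 1), ∑ ℓ ∈ range (j - ν + 1),
            ((j : ℝ) * b / α) ^ ν * (((j - ν : ℕ) : ℝ) * b / α) ^ ℓ *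
              (a + b * ‖z‖) ^ (j - ν - ℓ)) :=
  stmt_4_general α a b hα ha hb j z₀ v hbd
end

section
/- Let 0 < α̲ ≤ ᾱ, let a > 0, C_v > 0, b ≥ 0, j ∈ ℕ, and let v : ℂ → ℂ be entire with |v(z)| ≤ C_v (a+b|z|)^j · decay(z) for all z ∈ ℂ. If jb/(a·α̲) < 1, then for every z ∈ ℂ: |∫₀^∞ ∫₀^∞ v(z+t+τ) dτ dt| ≤ C_v·(1/α̲²)·(1/(1 − jb/(α̲·a)))²·(a+b|z|)^j·decay(z). -/
/-!
Moving a distance `s ≥ 0` to the right multiplies `decay` by at most `exp (-α̲ s)` (the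
slower rate wins on the right half-plane) and the polynomial factor `(a + b|z|)^j` by at most
`exp (j b s / a)`. Hence `v (z + s)` is bounded by the right-hand side at `z` times
`exp (-δ s)` with `δ = α̲ - j b / a > 0`, and each of the two ray integrals contributes a
factor `1 / δ`.
-/

open Set MeasureTheory

/-- The decay weight: `exp(-α̲·Re z)` for `Re z ≥ 0` and `exp(-ᾱ·Re z)` for `Re z < 0`. -/
noncomputable def decay (ua oa : ℝ) (z : ℂ) : ℝ :=
  if 0 ≤ z.re then Real.exp (-ua * z.re) else Real.exp (-oa * z.re)

lemma decay_nonneg (ua oa : ℝ) (z : ℂ) : 0 ≤ decay ua oa z := by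
  unfold decay; split <;> positivity

lemma decay_add_ofReal_le {ua oa : ℝ} (huo : ua ≤ oa) (z : ℂ) {s : ℝ} (hs : 0 ≤ s) :
    decay ua oa (z + s) ≤ decay ua oa z * Real.exp (-ua * s) := by
  simp only [decay, Complex.add_re, Complex.ofReal_re]
  split_ifs with h₁ h₂ h₂ <;> rw [← Real.exp_add, Real.exp_le_exp]
  · linarith
  · nlinarith
  · linarith
  · nlinarith

lemma add_mul_norm_add_le {E : Type*} [SeminormedAddCommGroup E] {a b : ℝ} (ha : 0 < a)
    (hb : 0 ≤ b) (z w : E) :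
    a + b * ‖z + w‖ ≤ (a + b * ‖z‖) * Real.exp (b * ‖w‖ / a) := by
  calc a + b * ‖z + w‖ ≤ a + b * ‖z‖ + b * ‖w‖ := by
        nlinarith [norm_add_le z w]
    _ ≤ a + b * ‖z‖ + b * ‖w‖ + b * ‖z‖ * (b * ‖w‖ / a) :=
        le_add_of_nonneg_right (by positivity)
    _ = (a + b * ‖z‖) * (1 + b * ‖w‖ / a) := by field_simp; ring
    _ ≤ (a + b * ‖z‖) * Real.exp (b * ‖w‖ / a) := by
        gcongr
        linarith [Real.add_one_le_exp (b * ‖w‖ / a)]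

lemma pow_add_mul_norm_add_le {E : Type*} [SeminormedAddCommGroup E] {a b : ℝ} (ha : 0 < a)
    (hb : 0 ≤ b) (j : ℕ) (z w : E) :
    (a + b * ‖z + w‖) ^ j ≤ (a + b * ‖z‖) ^ j * Real.exp (j * (b * ‖w‖ / a)) := by
  rw [Real.exp_nat_mul, ← mul_pow]
  gcongr
  exact add_mul_norm_add_le ha hb z w

lemma weight_add_ofReal_le {ua oa a b : ℝ} (huo : ua ≤ oa) (ha : 0 < a) (hb : 0 ≤ b) (j : ℕ)
    (z : ℂ) {s : ℝ} (hs : 0 ≤ s) :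
    (a + b * ‖z + s‖) ^ j * decay ua oa (z + s) ≤
      (a + b * ‖z‖) ^ j * decay ua oa z * Real.exp (-(ua - j * b / a) * s) := by
  have hpow := pow_add_mul_norm_add_le ha hb j z (s : ℂ)
  rw [Complex.norm_real, Real.norm_of_nonneg hs] at hpow
  calc (a + b * ‖z + s‖) ^ j * decay ua oa (z + s)
      ≤ ((a + b * ‖z‖) ^ j * Real.exp (j * (b * s / a))) *
          (decay ua oa z * Real.exp (-ua * s)) := by
        gcongr
        · exact decay_nonneg ua oa _
        · exact decay_add_ofReal_le huo z hs
    _ = (a + b * ‖z‖) ^ j * decay ua oa z * Real.exp (-(ua - j * b / a) * s) := by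
        rw [mul_mul_mul_comm, ← Real.exp_add]
        ring_nf

lemma norm_integral_Ioi_le_of_norm_le_exp {E : Type*} [NormedAddCommGroup E]
    [NormedSpace ℝ E] {δ K : ℝ} (hδ : 0 < δ) {f : ℝ → E}
    (hf : ∀ t ∈ Ioi (0 : ℝ), ‖f t‖ ≤ K * Real.exp (-δ * t)) :
    ‖∫ t in Ioi (0 : ℝ), f t‖ ≤ K / δ := by
  have hint : IntegrableOn (fun t : ℝ ↦ K * Real.exp (-δ * t)) (Ioi 0) :=
    (exp_neg_integrableOn_Ioi 0 hδ).const_mul K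
  calc ‖∫ t in Ioi (0 : ℝ), f t‖ ≤ ∫ t in Ioi (0 : ℝ), K * Real.exp (-δ * t) :=
        norm_integral_le_of_norm_le hint <|
          (ae_restrict_mem measurableSet_Ioi).mono fun t ht ↦ hf t ht
    _ = K / δ := by
        rw [integral_const_mul, integral_exp_mul_Ioi (by linarith)]
        field_simp
        simp

lemma norm_iteratedIntegral_Ioi_le_of_norm_le_exp {E : Type*} [NormedAddCommGroup E]
    [NormedSpace ℝ E] {δ K : ℝ} (hδ : 0 < δ) {f : ℝ → ℝ → E}
    (hf : ∀ t ∈ Ioi (0 : ℝ), ∀ τ ∈ Ioi (0 : ℝ),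
      ‖f t τ‖ ≤ K * Real.exp (-δ * (t + τ))) :
    ‖∫ t in Ioi (0 : ℝ), ∫ τ in Ioi (0 : ℝ), f t τ‖ ≤ K / δ ^ 2 := by
  have hinner : ∀ t ∈ Ioi (0 : ℝ),
      ‖∫ τ in Ioi (0 : ℝ), f t τ‖ ≤ K / δ * Real.exp (-δ * t) := by
    intro t ht
    rw [div_mul_eq_mul_div]
    refine norm_integral_Ioi_le_of_norm_le_exp hδ fun τ hτ ↦ ?_
    rw [mul_assoc, ← Real.exp_add, ← mul_add]
    exact hf t ht τ hτ
  rw [sq, ← div_div]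
  exact norm_integral_Ioi_le_of_norm_le_exp hδ hinner

theorem stmt_6_general (ua oa a Cv b : ℝ) (j : ℕ)
    (hua : 0 < ua) (huo : ua ≤ oa) (ha : 0 < a) (hb : 0 ≤ b)
    (v : ℂ → ℂ)
    (hvb : ∀ z : ℂ,
      ‖v z‖ ≤ Cv * (a + b * ‖z‖) ^ j * decay ua oa z)
    (hsmall : (j : ℝ) * b / (a * ua) < 1) :
    ∀ z : ℂ,
      ‖∫ t in Ioi (0:ℝ), ∫ τ in Ioi (0:ℝ), v (z + (t : ℂ) + (τ : ℂ))‖ ≤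
        Cv * (1 / ua ^ 2) * (1 / (1 - (j : ℝ) * b / (ua * a))) ^ 2 *
          (a + b * ‖z‖) ^ j * decay ua oa z := by
  intro z
  have hCv : 0 ≤ Cv := by
    have hweight : 0 < (a + b * ‖(0 : ℂ)‖) ^ j * decay ua oa 0 := by
      simp only [norm_zero, decay]; positivity
    refine nonneg_of_mul_nonneg_left ?_ hweight
    rw [← mul_assoc]
    exact (norm_nonneg _).trans (hvb 0)
  have hratio : (j : ℝ) * b / (ua * a) < 1 := by rwa [mul_comm ua]
  have hδ : ua - j * b / a = ua * (1 - j * b / (ua * a)) := by field_simp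
  have hδpos : 0 < ua - j * b / a := by rw [hδ]; exact mul_pos hua (by linarith)
  calc ‖∫ t in Ioi (0:ℝ), ∫ τ in Ioi (0:ℝ), v (z + (t : ℂ) + (τ : ℂ))‖
      ≤ Cv * ((a + b * ‖z‖) ^ j * decay ua oa z) / (ua - j * b / a) ^ 2 := by
        refine norm_iteratedIntegral_Ioi_le_of_norm_le_exp hδpos fun t ht τ hτ ↦ ?_
        have hshift := weight_add_ofReal_le huo ha hb j z (add_pos ht hτ).le
        rw [Complex.ofReal_add, ← add_assoc] at hshift
        calc ‖v (z + t + τ)‖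
            ≤ Cv * ((a + b * ‖z + t + τ‖) ^ j * decay ua oa (z + t + τ)) := by
              rw [← mul_assoc]; exact hvb _
          _ ≤ Cv * ((a + b * ‖z‖) ^ j * decay ua oa z *
                Real.exp (-(ua - j * b / a) * (t + τ))) :=
              mul_le_mul_of_nonneg_left hshift hCv
          _ = _ := (mul_assoc _ _ _).symm
    _ = Cv * (1 / ua ^ 2) * (1 / (1 - (j : ℝ) * b / (ua * a))) ^ 2 *
          (a + b * ‖z‖) ^ j * decay ua oa z := by
        rw [hδ]
        field_simp

/-- Bound for the double antiderivative (iterated integrals along rays parallel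
to the positive real axis) of an entire function satisfying an exponentially
decaying polynomial bound. -/
theorem stmt_6 (ua oa a Cv b : ℝ) (j : ℕ)
    (hua : 0 < ua) (huo : ua ≤ oa) (ha : 0 < a) (hCv : 0 < Cv) (hb : 0 ≤ b)
    (v : ℂ → ℂ) (hv : Differentiable ℂ v)
    (hvb : ∀ z : ℂ,
      ‖v z‖ ≤ Cv * (a + b * ‖z‖) ^ j * decay ua oa z)
    (hsmall : (j : ℝ) * b / (a * ua) < 1) :
    ∀ z : ℂ,
      ‖∫ t in Ioi (0:ℝ), ∫ τ in Ioi (0:ℝ), v (z + (t : ℂ) + (τ : ℂ))‖ ≤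
        Cv * (1 / ua ^ 2) * (1 / (1 - (j : ℝ) * b / (ua * a))) ^ 2 *
          (a + b * ‖z‖) ^ j * decay ua oa z :=
  stmt_6_general ua oa a Cv b j hua huo ha hb v hvb hsmall
end

section
/- Let 0 < α̲ ≤ ᾱ, let a > 0, C_v > 0, b ≥ 0, j ∈ ℕ, and let v : ℂ → ℂ be entire with |v(z)| ≤ C_v (a+b|z|)^j · decay(z) for all z ∈ ℂ. Then |v''(z)| ≤ 2·e^{ᾱ}·C_v·(a + b + b|z|)^j · decay(z) for all z ∈ ℂ. -/
/-!
On the unit circle about `z` the real part moves by at most `1`, so the weight `decay` grows by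
at most the factor `e^ᾱ`, and `a + b‖w‖ ≤ a + b + b‖z‖`. Cauchy's estimate
`‖v''(z)‖ ≤ 2! · sup_{|w - z| = 1} ‖v w‖` then gives the bound.
-/

lemma decay_pos (ua oa : ℝ) (z : ℂ) : 0 < decay ua oa z := by
  unfold decay; split <;> positivity

lemma decay_le_exp_mul_decay {ua oa r : ℝ} (hua : 0 ≤ ua) (huo : ua ≤ oa) (hr : 0 ≤ r)
    {z w : ℂ} (hzw : |w.re - z.re| ≤ r) :
    decay ua oa w ≤ Real.exp (oa * r) * decay ua oa z := by
  rw [abs_le] at hzw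
  unfold decay
  split_ifs <;> rw [← Real.exp_add, Real.exp_le_exp] <;> nlinarith

lemma norm_le_of_mem_sphere {z w : ℂ} {r : ℝ} (hw : w ∈ Metric.sphere z r) :
    ‖w‖ ≤ ‖z‖ + r := by
  simpa [mem_sphere_iff_norm.1 hw] using norm_le_norm_add_norm_sub' w z

lemma norm_le_of_mem_sphere_of_le_weight {ua oa a Cv b : ℝ} {j : ℕ} (hua : 0 ≤ ua)
    (huo : ua ≤ oa) (ha : 0 ≤ a) (hCv : 0 ≤ Cv) (hb : 0 ≤ b) {v : ℂ → ℂ}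
    (hvb : ∀ z : ℂ, ‖v z‖ ≤ Cv * (a + b * ‖z‖) ^ j * decay ua oa z) {z w : ℂ}
    (hw : w ∈ Metric.sphere z 1) :
    ‖v w‖ ≤ Real.exp oa * Cv * (a + b + b * ‖z‖) ^ j * decay ua oa z := by
  have hre : |w.re - z.re| ≤ 1 := by
    simpa [mem_sphere_iff_norm.1 hw] using Complex.abs_re_le_norm (w - z)
  have hdecay : decay ua oa w ≤ Real.exp oa * decay ua oa z := by
    simpa using decay_le_exp_mul_decay hua huo zero_le_one hre
  have hpoly : (a + b * ‖w‖) ^ j ≤ (a + b + b * ‖z‖) ^ j :=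
    pow_le_pow_left₀ (by positivity) (by nlinarith [norm_le_of_mem_sphere hw]) j
  calc ‖v w‖ ≤ Cv * (a + b * ‖w‖) ^ j * decay ua oa w := hvb w
    _ ≤ Cv * (a + b + b * ‖z‖) ^ j * (Real.exp oa * decay ua oa z) := by
      gcongr
      exact (decay_pos ua oa w).le
    _ = Real.exp oa * Cv * (a + b + b * ‖z‖) ^ j * decay ua oa z := by ring

/-- Bound for the second derivative of an entire function satisfying an
exponentially decaying polynomial bound (via Cauchy's formula on the
circle of radius 1). -/
theorem stmt_7 (ua oa a Cv b : ℝ) (j : ℕ)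
    (hua : 0 < ua) (huo : ua ≤ oa) (ha : 0 < a) (hCv : 0 < Cv) (hb : 0 ≤ b)
    (v : ℂ → ℂ) (hv : Differentiable ℂ v)
    (hvb : ∀ z : ℂ,
      ‖v z‖ ≤ Cv * (a + b * ‖z‖) ^ j * decay ua oa z) :
    ∀ z : ℂ, ‖deriv (deriv v) z‖ ≤
      2 * Real.exp oa * Cv * (a + b + b * ‖z‖) ^ j * decay ua oa z := by
  intro z
  have hcauchy := Complex.norm_iteratedDeriv_le_of_forall_mem_sphere_norm_le (c := z) 2 one_pos
    hv.diffContOnCl fun w hw ↦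
      norm_le_of_mem_sphere_of_le_weight hua.le huo ha.le hCv.le hb hvb hw
  rw [iteratedDeriv_succ, iteratedDeriv_one] at hcauchy
  simpa [Nat.factorial, mul_assoc] using hcauchy
end

section
/- Let c : [0,1] → ℝ be smooth with c(x) ≥ c̲ > 0 for all x ∈ [0,1] and suppose there exist C_c, γ_c > 0 with sup_{x∈[0,1]}|c^{(n)}(x)| ≤ C_c γ_c^n n! for all n ∈ ℕ. Then there exist constants γ₀ > 0 and C̃ > 0, depending only on c, such that for every μ ∈ (0,1], every γ ≥ γ₀, every C_g > 0, every smooth g : [0,1] → ℝ with sup_{x∈[0,1]}|g^{(n)}(x)| ≤ C_g γ^n max{n, μ^{-1}}^n for all n ∈ ℕ, every g₋, g₊ ∈ ℝ, and every smooth u : [0,1] → ℝ satisfying −μ²u'' + cu = g on (0,1) with u(0) = g₋ and u(1) = g₊, one has sup_{x∈[0,1]}|u^{(n)}(x)| ≤ C̃ γ^n max{n, μ^{-1}}^n (C_g + |g₊| + |g₋|) for all n ∈ ℕ. -/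
open Set Filter Topology
set_option maxHeartbeats 1000000

private lemma aux_deriv2_nonpos {f : ℝ → ℝ} {x : ℝ} (hf : ContDiff ℝ (⊤ : ℕ∞) f) (h : IsLocalMax f x) :
    iteratedDeriv 2 f x ≤ 0 := by
  rw [show (2:ℕ) = 1 + 1 from rfl, iteratedDeriv_succ, iteratedDeriv_one]
  by_contra hpos
  push_neg at hpos
  have hd1 : deriv f x = 0 := h.deriv_eq_zero
  have hdf := (contDiff_infty_iff_deriv.mp (hf.of_le (by simp))).2
  have hda : HasDerivAt (deriv f) (deriv (deriv f) x) x :=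
    ((hdf.differentiable (by simp)) x).hasDerivAt
  rw [hasDerivAt_iff_tendsto_slope] at hda
  have h1 : ∀ᶠ y in 𝓝[≠] x, 0 < slope (deriv f) x y := hda.eventually (eventually_gt_nhds hpos)
  have h2 : ∀ᶠ y in 𝓝[>] x, 0 < deriv f y := by
    filter_upwards [h1.filter_mono (nhdsWithin_mono x fun y hy => ne_of_gt hy),
      self_mem_nhdsWithin] with y hy hxy
    rw [slope_def_field, hd1, sub_zero] at hy
    rcases div_pos_iff.mp hy with ⟨h', _⟩ | ⟨_, h2'⟩
    · exact h'
    · have : (0:ℝ) < y - x := sub_pos.mpr hxy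
      linarith
  have h3 : ∀ᶠ y in 𝓝[>] x, f y ≤ f x := h.filter_mono nhdsWithin_le_nhds
  obtain ⟨u, hu, hsub⟩ := mem_nhdsGT_iff_exists_Ioo_subset.mp (h2.and h3)
  have hxu : x < u := hu
  set m := (x + u) / 2 with hm
  have hxm : x < m := by rw [hm]; linarith
  have hmu : m < u := by rw [hm]; linarith
  have hmono : StrictMonoOn f (Icc x m) := by
    apply strictMonoOn_of_deriv_pos (convex_Icc x m) (hf.continuous.continuousOn)
    intro y hy
    rw [interior_Icc] at hy
    exact (hsub ⟨hy.1, hy.2.trans hmu⟩).1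
  have : f x < f m := hmono (left_mem_Icc.mpr hxm.le) (right_mem_Icc.mpr hxm.le) hxm
  exact absurd (hsub ⟨hxm, hmu⟩).2 (not_le.mpr this)

private lemma aux_maxprin {μ cLow CG : ℝ} {c g u : ℝ → ℝ} (hcLow : 0 < cLow)
    (hclb : ∀ x ∈ Icc (0:ℝ) 1, cLow ≤ c x)
    (hgb : ∀ x ∈ Icc (0:ℝ) 1, |g x| ≤ CG)
    (hu : ContDiff ℝ (⊤ : ℕ∞) u)
    (hode : ∀ x ∈ Ioo (0:ℝ) 1, -μ ^ 2 * iteratedDeriv 2 u x + c x * u x = g x) :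
    ∀ x ∈ Icc (0:ℝ) 1, |u x| ≤ max (max |u 0| |u 1|) (CG / cLow) := by
  obtain ⟨x0, hx0, hmax⟩ := isCompact_Icc.exists_isMaxOn (nonempty_Icc.mpr zero_le_one)
    ((continuous_abs.comp hu.continuous).continuousOn (s := Icc (0:ℝ) 1))
  intro x hx
  refine le_trans (hmax hx) ?_
  by_cases h0 : x0 = 0
  · subst h0; exact le_max_of_le_left (le_max_left _ _)
  by_cases h1 : x0 = 1
  · subst h1; exact le_max_of_le_left (le_max_right _ _)
  have hx0' : x0 ∈ Ioo (0:ℝ) 1 :=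
    ⟨lt_of_le_of_ne hx0.1 (Ne.symm h0), lt_of_le_of_ne hx0.2 h1⟩
  have hnb : Icc (0:ℝ) 1 ∈ 𝓝 x0 := Icc_mem_nhds hx0'.1 hx0'.2
  have heq := hode x0 hx0'
  have hgx := abs_le.mp (hgb x0 hx0)
  have hcx := hclb x0 hx0
  refine le_max_of_le_right ?_
  rw [le_div_iff₀ hcLow]
  show |u x0| * cLow ≤ CG
  by_cases hsign : 0 ≤ u x0
  · have hmaxu : IsMaxOn u (Icc (0:ℝ) 1) x0 := fun y hy =>
      le_trans (le_abs_self _) (le_trans (hmax hy) (le_of_eq (abs_of_nonneg hsign)))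
    have hd2 : iteratedDeriv 2 u x0 ≤ 0 := aux_deriv2_nonpos hu (hmaxu.isLocalMax hnb)
    have hcu : cLow * u x0 ≤ c x0 * u x0 := mul_le_mul_of_nonneg_right hcx hsign
    rw [abs_of_nonneg hsign]
    nlinarith [mul_nonneg (sq_nonneg μ) (neg_nonneg.mpr hd2)]
  · push_neg at hsign
    have hminu : IsMaxOn (fun y => -u y) (Icc (0:ℝ) 1) x0 := by
      intro y hy
      have h2' : -u y ≤ |u y| := neg_le_abs _
      have h2 : |u y| ≤ |u x0| := hmax hy
      have h3 : |u x0| = -u x0 := abs_of_neg hsign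
      simp only [mem_setOf_eq]
      linarith
    have hd2 : iteratedDeriv 2 (fun y => -u y) x0 ≤ 0 :=
      aux_deriv2_nonpos hu.neg (hminu.isLocalMax hnb)
    rw [iteratedDeriv_fun_neg] at hd2
    have hcu : c x0 * u x0 ≤ cLow * u x0 := by nlinarith
    rw [abs_of_neg hsign]
    nlinarith [mul_nonneg (sq_nonneg μ) (neg_nonneg.mpr hd2)]

private lemma aux_ode_iter {μ : ℝ} {c g u : ℝ → ℝ} (hc : ContDiff ℝ (⊤ : ℕ∞) c) (hg : ContDiff ℝ (⊤ : ℕ∞) g)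
    (hu : ContDiff ℝ (⊤ : ℕ∞) u)
    (hode : ∀ x ∈ Ioo (0:ℝ) 1, -μ ^ 2 * iteratedDeriv 2 u x + c x * u x = g x) (n : ℕ) :
    ∀ x ∈ Icc (0:ℝ) 1,
      μ ^ 2 * iteratedDeriv (n + 2) u x = iteratedDeriv n (fun y => c y * u y - g y) x := by
  set w : ℝ → ℝ := fun y => c y * u y - g y with hw
  have hIoo : ∀ n : ℕ, ∀ x ∈ Ioo (0:ℝ) 1,
      μ ^ 2 * iteratedDeriv (n + 2) u x = iteratedDeriv n w x := by
    intro n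
    induction n with
    | zero =>
      intro x hx
      have := hode x hx
      simp only [iteratedDeriv_zero, hw]
      linarith
    | succ n ih =>
      intro x hx
      have hev : (fun y => μ ^ 2 * iteratedDeriv (n + 2) u y) =ᶠ[𝓝 x] iteratedDeriv n w :=
        eventually_of_mem (isOpen_Ioo.mem_nhds hx) fun y hy => ih y hy
      have hlt : ((n + 2 : ℕ) : WithTop ℕ∞) < ((⊤ : ℕ∞) : WithTop ℕ∞) :=
        WithTop.coe_lt_coe.mpr (ENat.coe_lt_top _)
      have hdiff : DifferentiableAt ℝ (iteratedDeriv (n + 2) u) x :=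
        (hu.differentiable_iteratedDeriv (n + 2) hlt) x
      have e1 : n + 1 + 2 = n + 2 + 1 := by omega
      rw [e1, iteratedDeriv_succ (n := n + 2) (f := u), iteratedDeriv_succ (n := n) (f := w),
        ← hev.deriv_eq, deriv_const_mul _ hdiff]
  intro x hx
  have hcont1 : Continuous fun y => μ ^ 2 * iteratedDeriv (n + 2) u y :=
    continuous_const.mul (hu.continuous_iteratedDeriv (n + 2) (WithTop.coe_le_coe.mpr (le_top : ((n + 2 : ℕ) : ℕ∞) ≤ ⊤)))
  have hcont2 : Continuous (iteratedDeriv n w) :=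
    ((hc.mul hu).sub hg).continuous_iteratedDeriv n (by exact_mod_cast le_top)
  have hcl := (Set.EqOn.closure (fun y hy => hIoo n y hy) hcont1 hcont2)
  rw [closure_Ioo (by norm_num : (0:ℝ) ≠ 1)] at hcl
  exact hcl hx

private lemma aux_leibniz {c u : ℝ → ℝ} (hc : ContDiff ℝ (⊤ : ℕ∞) c) (hu : ContDiff ℝ (⊤ : ℕ∞) u)
    (n : ℕ) (x : ℝ) :
    |iteratedDeriv n (fun y => c y * u y) x| ≤ ∑ i ∈ Finset.range (n + 1),
      (n.choose i : ℝ) * |iteratedDeriv i c x| * |iteratedDeriv (n - i) u x| := by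
  have h := norm_iteratedFDeriv_mul_le (𝕜 := ℝ) hc hu x (n := n) (WithTop.coe_le_coe.mpr (le_top : (n : ℕ∞) ≤ ⊤))
  simpa [norm_iteratedFDeriv_eq_norm_iteratedDeriv, Real.norm_eq_abs] using h

private lemma aux_sub {f g : ℝ → ℝ} (hf : ContDiff ℝ (⊤ : ℕ∞) f) (hg : ContDiff ℝ (⊤ : ℕ∞) g) (n : ℕ) (x : ℝ) :
    iteratedDeriv n (fun y => f y - g y) x = iteratedDeriv n f x - iteratedDeriv n g x := by
  have h := iteratedDerivWithin_sub (mem_univ x) uniqueDiffOn_univ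
    ((hf.of_le (by exact_mod_cast le_top)).contDiffWithinAt (s := univ) (x := x) (n := (n : WithTop ℕ∞)))
    ((hg.of_le (by exact_mod_cast le_top)).contDiffWithinAt (s := univ) (x := x) (n := (n : WithTop ℕ∞)))
  simpa [iteratedDerivWithin_univ, Pi.sub_def] using h

private lemma aux_geom (m : ℕ) : ∑ i ∈ Finset.range m, ((2:ℝ)⁻¹) ^ i ≤ 2 := by
  rw [geom_sum_eq (by norm_num : ((2:ℝ)⁻¹) ≠ 1)]
  have h0 : (0:ℝ) ≤ (2⁻¹:ℝ) ^ m := by positivity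
  rw [div_le_iff_of_neg (by norm_num : (2:ℝ)⁻¹ - 1 < 0)]
  nlinarith

/-- Regularity estimate for the scalar singularly perturbed two-point boundary
value problem `-μ²u'' + cu = g` on `(0,1)` with analytic coefficient `c`
bounded below by a positive constant: derivative bounds explicit in `μ`. -/
theorem stmt_9 (c : ℝ → ℝ) (cLow Cc γc : ℝ)
    (hcLow : 0 < cLow) (hCc : 0 < Cc) (hγc : 0 < γc)
    (hcs : ContDiff ℝ (⊤ : ℕ∞) c)
    (hclb : ∀ x ∈ Icc (0:ℝ) 1, cLow ≤ c x)
    (hcb : ∀ n : ℕ, ∀ x ∈ Icc (0:ℝ) 1,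
      |iteratedDeriv n c x| ≤ Cc * γc ^ n * n.factorial) :
    ∃ γ₀ C' : ℝ, 0 < γ₀ ∧ 0 < C' ∧
      ∀ μ : ℝ, 0 < μ → μ ≤ 1 →
      ∀ γ : ℝ, γ₀ ≤ γ →
      ∀ Cg : ℝ, 0 < Cg →
      ∀ g : ℝ → ℝ, ContDiff ℝ (⊤ : ℕ∞) g →
      (∀ n : ℕ, ∀ x ∈ Icc (0:ℝ) 1,
        |iteratedDeriv n g x| ≤ Cg * γ ^ n * (max (n : ℝ) μ⁻¹) ^ n) →
      ∀ gm gp : ℝ,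
      ∀ u : ℝ → ℝ, ContDiff ℝ (⊤ : ℕ∞) u →
      (∀ x ∈ Ioo (0:ℝ) 1, -μ ^ 2 * iteratedDeriv 2 u x + c x * u x = g x) →
      u 0 = gm → u 1 = gp →
      ∀ n : ℕ, ∀ x ∈ Icc (0:ℝ) 1,
        |iteratedDeriv n u x| ≤
          C' * γ ^ n * (max (n : ℝ) μ⁻¹) ^ n * (Cg + |gp| + |gm|) := by
  set A₀ : ℝ := max 1 cLow⁻¹ with hA₀def
  have hA₀1 : (1:ℝ) ≤ A₀ := le_max_left _ _
  have hA₀pos : (0:ℝ) < A₀ := lt_of_lt_of_le one_pos hA₀1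
  refine ⟨2*γc + 2*Cc + 1, (2+Cc) * A₀ + 1, by positivity, by positivity, ?_⟩
  intro μ hμ hμ1 γ hγ Cg hCg g hgs hgb gm gp u hus hode hu0 hu1
  set C' : ℝ := (2+Cc) * A₀ + 1 with hC'def
  set K : ℝ := Cg + |gp| + |gm| with hKdef
  have hC'1 : (1:ℝ) ≤ C' := by nlinarith
  have hC'pos : (0:ℝ) < C' := lt_of_lt_of_le one_pos hC'1
  have hKpos : 0 < K := by positivity
  have hCgK : Cg ≤ K := by
    have := abs_nonneg gp; have := abs_nonneg gm; rw [hKdef]; linarith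
  have hμinv : (1:ℝ) ≤ μ⁻¹ := (one_le_inv₀ hμ).mpr hμ1
  have hμinvpos : (0:ℝ) < μ⁻¹ := inv_pos.mpr hμ
  have hγ1 : (1:ℝ) ≤ γ := by nlinarith
  have hγpos : (0:ℝ) < γ := lt_of_lt_of_le one_pos hγ1
  have hγc2 : 2 * γc ≤ γ := by nlinarith
  have hγsq : 2 * Cc + 1 ≤ γ ^ 2 := by nlinarith
  have hμ2 : (0:ℝ) < μ ^ 2 := by positivity
  -- zeroth-order bounds
  have hgb0 : ∀ x ∈ Icc (0:ℝ) 1, |g x| ≤ Cg := by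
    intro x hx; have := hgb 0 x hx; simpa using this
  have hcb0 : ∀ x ∈ Icc (0:ℝ) 1, |c x| ≤ Cc := by
    intro x hx; have := hcb 0 x hx; simpa using this
  have hu0b : ∀ x ∈ Icc (0:ℝ) 1, |u x| ≤ A₀ * K := by
    intro x hx
    have h := aux_maxprin hcLow hclb hgb0 hus hode x hx
    have hKA : K ≤ A₀ * K := by nlinarith
    have h1 : max |u 0| |u 1| ≤ A₀ * K := by
      rw [hu0, hu1]
      apply max_le
      · refine le_trans ?_ hKA; rw [hKdef]; have := abs_nonneg gp; linarith
      · refine le_trans ?_ hKA; rw [hKdef]; have := abs_nonneg gm; linarith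
    have h2 : Cg / cLow ≤ A₀ * K := by
      rw [div_eq_mul_inv]
      calc Cg * cLow⁻¹ ≤ K * A₀ :=
            mul_le_mul hCgK (le_max_right _ _) (inv_pos.mpr hcLow).le hKpos.le
        _ = A₀ * K := mul_comm _ _
    exact le_trans h (max_le h1 h2)
  -- second derivative bound from the ODE
  have hi2 : iteratedDeriv 2 u = deriv (deriv u) := by
    rw [show (2:ℕ) = 1 + 1 from rfl, iteratedDeriv_succ, iteratedDeriv_one]
  have hd2b : ∀ η ∈ Ioo (0:ℝ) 1, μ ^ 2 * |deriv (deriv u) η| ≤ Cc * (A₀ * K) + Cg := by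
    intro η hη
    have heq := hode η hη
    rw [hi2] at heq
    have hη' : η ∈ Icc (0:ℝ) 1 := Ioo_subset_Icc_self hη
    have h1 := hcb0 η hη'
    have h2 := hu0b η hη'
    have h3 := hgb0 η hη'
    have e1 : μ ^ 2 * |deriv (deriv u) η| = |μ ^ 2 * deriv (deriv u) η| := by
      rw [abs_mul, abs_of_nonneg (sq_nonneg μ)]
    have e2 : μ ^ 2 * deriv (deriv u) η = c η * u η - g η := by linarith
    rw [e1, e2]
    calc |c η * u η - g η| ≤ |c η * u η| + |g η| := abs_sub _ _
      _ = |c η| * |u η| + |g η| := by rw [abs_mul]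
      _ ≤ Cc * (A₀ * K) + Cg :=
          add_le_add (mul_le_mul h1 h2 (abs_nonneg _) hCc.le) h3
  -- main strong induction
  have main : ∀ n : ℕ, ∀ x ∈ Icc (0:ℝ) 1,
      |iteratedDeriv n u x| ≤ C' * γ ^ n * (max (n : ℝ) μ⁻¹) ^ n * K := by
    intro n
    induction n using Nat.strong_induction_on with
    | _ n IH =>
      rcases n with _ | n
      · -- n = 0
        intro x hx
        have h := hu0b x hx
        have hA₀C' : A₀ ≤ C' := by nlinarith
        simp only [iteratedDeriv_zero, pow_zero, mul_one, one_mul]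
        nlinarith
      rcases n with _ | m
      · -- n = 1
        intro x hx
        have hdus := (contDiff_infty_iff_deriv.mp (hus.of_le (by simp))).2
        set a : ℝ := min x (1 - μ) with hadef
        have ha0 : 0 ≤ a := le_min hx.1 (by linarith)
        have hax : a ≤ x := min_le_left _ _
        have hb1 : a + μ ≤ 1 := by
          have := min_le_right x (1 - μ); linarith
        have hxb : x ≤ a + μ := by
          rcases le_total x (1 - μ) with h | h
          · have : a = x := min_eq_left h; linarith
          · have : a = 1 - μ := min_eq_right h; linarith [hx.2]
        have hab : a < a + μ := by linarith
        obtain ⟨ξ, hξ, hslope⟩ := exists_deriv_eq_slope u hab hus.continuous.continuousOn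
          ((hus.differentiable (by simp)).differentiableOn)
        have hξb : |deriv u ξ| ≤ 2 * (A₀ * K) / μ := by
          rw [hslope, abs_div]
          have h1 : |u (a + μ) - u a| ≤ 2 * (A₀ * K) := by
            have hb := hu0b (a + μ) ⟨by linarith, hb1⟩
            have ha := hu0b a ⟨ha0, by linarith⟩
            calc |u (a + μ) - u a| ≤ |u (a + μ)| + |u a| := abs_sub _ _
              _ ≤ 2 * (A₀ * K) := by linarith
          have h2 : |a + μ - a| = μ := by
            rw [add_sub_cancel_left]; exact abs_of_pos hμ
          rw [h2]
          gcongr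
        have hstep : ∀ p q : ℝ, p ∈ Icc a (a + μ) → q ∈ Icc a (a + μ) → p < q →
            |deriv u q - deriv u p| ≤ μ * ((Cc * (A₀ * K) + Cg) / μ ^ 2) := by
          intro p q hp hq hpq
          obtain ⟨η, hη, he⟩ := exists_deriv_eq_slope (deriv u) hpq
            hdus.continuous.continuousOn
            ((hdus.differentiable (by simp)).differentiableOn)
          have hη01 : η ∈ Ioo (0:ℝ) 1 :=
            ⟨by have := hp.1; have := hη.1; linarith,
             by have := hq.2; have := hη.2; linarith⟩
          have hd := hd2b η hη01
          rw [eq_div_iff (sub_ne_zero.mpr (ne_of_gt hpq))] at he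
          rw [← he, abs_mul]
          have h1 : |deriv (deriv u) η| ≤ (Cc * (A₀ * K) + Cg) / μ ^ 2 := by
            rw [le_div_iff₀ hμ2]; linarith
          have h2 : |q - p| ≤ μ := by
            rw [abs_of_pos (sub_pos.mpr hpq)]
            have := hp.1; have := hq.2; linarith
          calc |deriv (deriv u) η| * |q - p|
              ≤ (Cc * (A₀ * K) + Cg) / μ ^ 2 * μ := by
                apply mul_le_mul h1 h2 (abs_nonneg _) (by positivity)
            _ = μ * ((Cc * (A₀ * K) + Cg) / μ ^ 2) := mul_comm _ _
        have hkey : |deriv u x - deriv u ξ| ≤ μ * ((Cc * (A₀ * K) + Cg) / μ ^ 2) := by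
          rcases lt_trichotomy x ξ with hlt | heqq | hgt
          · rw [abs_sub_comm]
            exact hstep x ξ ⟨hax, hxb⟩ (Ioo_subset_Icc_self hξ) hlt
          · rw [heqq]; simp; positivity
          · exact hstep ξ x (Ioo_subset_Icc_self hξ) ⟨hax, hxb⟩ hgt
        have hfin : |deriv u x| ≤ 2 * (A₀ * K) / μ + μ * ((Cc * (A₀ * K) + Cg) / μ ^ 2) := by
          calc |deriv u x| = |deriv u ξ + (deriv u x - deriv u ξ)| := by ring_nf
            _ ≤ |deriv u ξ| + |deriv u x - deriv u ξ| := abs_add_le _ _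
            _ ≤ _ := add_le_add hξb hkey
        have hrw : 2 * (A₀ * K) / μ + μ * ((Cc * (A₀ * K) + Cg) / μ ^ 2)
            = (2 * (A₀ * K) + Cc * (A₀ * K) + Cg) * μ⁻¹ := by
          field_simp; ring
        have hC'K : 2 * (A₀ * K) + Cc * (A₀ * K) + Cg ≤ C' * K := by
          have : C' * K = 2 * (A₀ * K) + Cc * (A₀ * K) + K := by rw [hC'def]; ring
          linarith
        have hfin2 : |deriv u x| ≤ C' * K * μ⁻¹ := by
          rw [hrw] at hfin
          calc |deriv u x| ≤ (2 * (A₀ * K) + Cc * (A₀ * K) + Cg) * μ⁻¹ := hfin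
            _ ≤ C' * K * μ⁻¹ := by gcongr
        have hgoal : |deriv u x| ≤ C' * γ * μ⁻¹ * K := by
          calc |deriv u x| ≤ C' * K * μ⁻¹ := hfin2
            _ ≤ C' * K * μ⁻¹ * γ := by
                nlinarith [mul_nonneg (mul_nonneg (mul_pos hC'pos hKpos).le hμinvpos.le)
                  (sub_nonneg.mpr hγ1)]
            _ = C' * γ * μ⁻¹ * K := by ring
        have hmax1 : max (1:ℝ) μ⁻¹ = μ⁻¹ := max_eq_right hμinv
        simpa [iteratedDeriv_one, hmax1] using hgoal
      · -- n = m + 2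
        intro x hx
        show |iteratedDeriv (m + 2) u x| ≤
          C' * γ ^ (m + 2) * (max ((m + 2 : ℕ) : ℝ) μ⁻¹) ^ (m + 2) * K
        set X : ℝ := max ((m + 2 : ℕ) : ℝ) μ⁻¹ with hXdef
        have hXμ : μ⁻¹ ≤ X := le_max_right _ _
        have hX1 : (1:ℝ) ≤ X := le_trans hμinv hXμ
        have hXpos : (0:ℝ) < X := lt_of_lt_of_le one_pos hX1
        have hw := aux_ode_iter hcs hgs hus hode m x hx
        have hsplit : |iteratedDeriv m (fun y => c y * u y - g y) x| ≤
            |iteratedDeriv m (fun y => c y * u y) x| + |iteratedDeriv m g x| := by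
          rw [aux_sub (hcs.mul hus) hgs]
          exact abs_sub _ _
        have hLeib := aux_leibniz hcs hus m x
        have hterm : ∀ i ∈ Finset.range (m + 1),
            (m.choose i : ℝ) * |iteratedDeriv i c x| * |iteratedDeriv (m - i) u x| ≤
              (Cc * (C' * K) * (γ ^ m * X ^ m)) * ((2:ℝ)⁻¹) ^ i := by
          intro i hi
          have him : i ≤ m := Nat.lt_succ_iff.mp (Finset.mem_range.mp hi)
          have h1 := hcb i x hx
          have h2 := IH (m - i) (by omega) x hx
          have hcf : ((m.choose i : ℕ) : ℝ) * (i.factorial : ℝ) ≤ X ^ i := by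
            have hnat : m.choose i * i.factorial ≤ m ^ i := by
              have hd := Nat.descFactorial_le_pow m i
              rw [Nat.descFactorial_eq_factorial_mul_choose] at hd
              rwa [Nat.mul_comm] at hd
            calc ((m.choose i : ℕ) : ℝ) * (i.factorial : ℝ) ≤ ((m:ℝ)) ^ i := by
                  exact_mod_cast hnat
              _ ≤ X ^ i := by
                  apply pow_le_pow_left₀ (Nat.cast_nonneg m)
                  exact le_trans (by exact_mod_cast Nat.le_add_right m 2) (le_max_left _ _)
          have hγci : γc ^ i ≤ (γ * 2⁻¹) ^ i := by
            apply pow_le_pow_left₀ hγc.le; linarith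
          have hY : (max ((m - i : ℕ) : ℝ) μ⁻¹) ^ (m - i) ≤ X ^ (m - i) := by
            apply pow_le_pow_left₀ (le_trans hμinvpos.le (le_max_right _ _))
            exact max_le_max (by exact_mod_cast (by omega : m - i ≤ m + 2)) le_rfl
          calc (m.choose i : ℝ) * |iteratedDeriv i c x| * |iteratedDeriv (m - i) u x|
              ≤ (m.choose i : ℝ) * (Cc * γc ^ i * (i.factorial : ℝ)) *
                (C' * γ ^ (m - i) * (max ((m - i : ℕ) : ℝ) μ⁻¹) ^ (m - i) * K) := by
                apply mul_le_mul (mul_le_mul le_rfl h1 (abs_nonneg _) (Nat.cast_nonneg _)) h2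
                  (abs_nonneg _) (by positivity)
            _ = (Cc * (C' * K)) * (((m.choose i : ℝ) * (i.factorial : ℝ)) * γc ^ i *
                (γ ^ (m - i) * (max ((m - i : ℕ) : ℝ) μ⁻¹) ^ (m - i))) := by ring
            _ ≤ (Cc * (C' * K)) * ((X ^ i) * (γ * 2⁻¹) ^ i * (γ ^ (m - i) * X ^ (m - i))) := by
                apply mul_le_mul_of_nonneg_left ?_ (by positivity)
                apply mul_le_mul (mul_le_mul hcf hγci (by positivity) (by positivity)) ?_
                  (by positivity) (by positivity)
                apply mul_le_mul_of_nonneg_left hY (by positivity)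
            _ = (Cc * (C' * K) * (γ ^ m * X ^ m)) * ((2:ℝ)⁻¹) ^ i := by
                rw [mul_pow]
                rw [show X ^ i * (γ ^ i * ((2:ℝ)⁻¹) ^ i) * (γ ^ (m - i) * X ^ (m - i)) =
                  (X ^ i * X ^ (m - i)) * (γ ^ i * γ ^ (m - i)) * ((2:ℝ)⁻¹) ^ i from by ring]
                rw [← pow_add, ← pow_add, show i + (m - i) = m from by omega]
                ring
        have hsum : ∑ i ∈ Finset.range (m + 1),
            (m.choose i : ℝ) * |iteratedDeriv i c x| * |iteratedDeriv (m - i) u x| ≤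
              (Cc * (C' * K) * (γ ^ m * X ^ m)) * 2 := by
          calc _ ≤ ∑ i ∈ Finset.range (m + 1),
                (Cc * (C' * K) * (γ ^ m * X ^ m)) * ((2:ℝ)⁻¹) ^ i :=
                  Finset.sum_le_sum hterm
            _ = (Cc * (C' * K) * (γ ^ m * X ^ m)) * ∑ i ∈ Finset.range (m + 1), ((2:ℝ)⁻¹) ^ i := by
                  rw [Finset.mul_sum]
            _ ≤ _ := by
                  apply mul_le_mul_of_nonneg_left (aux_geom (m + 1)) (by positivity)
        have hgm : |iteratedDeriv m g x| ≤ K * (γ ^ m * X ^ m) := by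
          have h := hgb m x hx
          have hMm : (max ((m:ℕ) : ℝ) μ⁻¹) ^ m ≤ X ^ m := by
            apply pow_le_pow_left₀ (le_trans hμinvpos.le (le_max_right _ _))
            exact max_le_max (by exact_mod_cast (by omega : m ≤ m + 2)) le_rfl
          calc |iteratedDeriv m g x| ≤ Cg * γ ^ m * (max ((m:ℕ) : ℝ) μ⁻¹) ^ m := h
            _ ≤ K * γ ^ m * X ^ m := by
                apply mul_le_mul (mul_le_mul hCgK le_rfl (by positivity) (by positivity)) hMm
                  (by positivity) (by positivity)
            _ = K * (γ ^ m * X ^ m) := by ring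
        have hwb : |iteratedDeriv m (fun y => c y * u y - g y) x| ≤
            (2 * Cc * (C' * K) + K) * (γ ^ m * X ^ m) := by
          calc |iteratedDeriv m (fun y => c y * u y - g y) x|
              ≤ |iteratedDeriv m (fun y => c y * u y) x| + |iteratedDeriv m g x| := hsplit
            _ ≤ (Cc * (C' * K) * (γ ^ m * X ^ m)) * 2 + K * (γ ^ m * X ^ m) :=
                add_le_add (hLeib.trans hsum) hgm
            _ = (2 * Cc * (C' * K) + K) * (γ ^ m * X ^ m) := by ring
        have hudiv : iteratedDeriv (m + 2) u x =
            iteratedDeriv m (fun y => c y * u y - g y) x / μ ^ 2 := by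
          rw [eq_div_iff (ne_of_gt hμ2)]; linarith
        have hfac : 2 * Cc * (C' * K) + K ≤ C' * γ ^ 2 * K := by
          nlinarith [mul_le_mul_of_nonneg_left hγsq (mul_pos hC'pos hKpos).le,
            mul_le_mul_of_nonneg_left hC'1 hKpos.le]
        calc |iteratedDeriv (m + 2) u x|
            = |iteratedDeriv m (fun y => c y * u y - g y) x| / μ ^ 2 := by
              rw [hudiv, abs_div, abs_of_pos hμ2]
          _ ≤ (2 * Cc * (C' * K) + K) * (γ ^ m * X ^ m) / μ ^ 2 := by gcongr
          _ = (2 * Cc * (C' * K) + K) * (γ ^ m * X ^ m) * (μ⁻¹) ^ 2 := by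
              rw [div_eq_mul_inv, inv_pow]
          _ ≤ (C' * γ ^ 2 * K) * (γ ^ m * X ^ m) * X ^ 2 := by
              apply mul_le_mul (mul_le_mul hfac le_rfl (by positivity) (by positivity))
                (pow_le_pow_left₀ hμinvpos.le hXμ 2) (by positivity) (by positivity)
          _ = C' * γ ^ (m + 2) * X ^ (m + 2) * K := by
              rw [pow_add γ m 2, pow_add X m 2]; ring
  exact main
end

section
/- Let g : [0,1] → ℝ be smooth and suppose there exist C_g, γ_g > 0 with sup_{x∈[0,1]}|g^{(n)}(x)| ≤ C_g γ_g^n n! for all n ∈ ℕ. Then there exist constants C′, γ₀ > 0, depending only on C_g and γ_g, such that for every m ∈ ℕ, every μ > 0, every C_v > 0, every γ_v ≥ γ₀, and every smooth v : [0,1] → ℝ with sup_{x∈[0,1]}|v^{(n)}(x)| ≤ C_v γ_v^n max{n, μ^{-1}}^n for all n ∈ ℕ, the function V := g·v^{(m)} satisfies sup_{x∈[0,1]}|V^{(n)}(x)| ≤ C′ C_v γ_v^{n+m} max{n+m, μ^{-1}}^{n+m} for all n ∈ ℕ. -/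
open Set

lemma geo_half (k : ℕ) : ∑ i ∈ Finset.range k, (2⁻¹ : ℝ) ^ i ≤ 2 := by
  induction k with
  | zero => norm_num
  | succ k ih =>
    have h : ∑ i ∈ Finset.range (k+1), (2⁻¹ : ℝ) ^ i
        = 1 + 2⁻¹ * ∑ i ∈ Finset.range k, (2⁻¹ : ℝ) ^ i := by
      rw [geom_sum_eq (by norm_num), geom_sum_eq (by norm_num)]
      ring
    rw [h]; linarith


/-- Leibniz-rule estimate: multiplying the `m`-th derivative of a function with
`μ`-explicit analytic derivative bounds by an analytic function preserves such
bounds, with the order shifted by `m`. -/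
theorem stmt_10 (g : ℝ → ℝ) (Cg γg : ℝ) (hCg : 0 < Cg) (hγg : 0 < γg)
    (hgs : ContDiff ℝ (⊤ : ℕ∞) g)
    (hgb : ∀ n : ℕ, ∀ x ∈ Icc (0:ℝ) 1,
      |iteratedDeriv n g x| ≤ Cg * γg ^ n * n.factorial) :
    ∃ C' γ₀ : ℝ, 0 < C' ∧ 0 < γ₀ ∧
      ∀ m : ℕ, ∀ μ : ℝ, 0 < μ →
      ∀ Cv : ℝ, 0 < Cv →
      ∀ γv : ℝ, γ₀ ≤ γv →
      ∀ v : ℝ → ℝ, ContDiff ℝ (⊤ : ℕ∞) v →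
      (∀ n : ℕ, ∀ x ∈ Icc (0:ℝ) 1,
        |iteratedDeriv n v x| ≤ Cv * γv ^ n * (max (n : ℝ) μ⁻¹) ^ n) →
      ∀ n : ℕ, ∀ x ∈ Icc (0:ℝ) 1,
        |iteratedDeriv n (fun y => g y * iteratedDeriv m v y) x| ≤
          C' * Cv * γv ^ (n + m) * (max ((n : ℝ) + (m : ℝ)) μ⁻¹) ^ (n + m) := by
  refine ⟨2 * Cg, 2 * γg, by linarith, by linarith, ?_⟩
  intro m μ hμ Cv hCv γv hγv v hvs hvb n x hx
  have hγv0 : 0 < γv := lt_of_lt_of_le (by linarith) hγv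
  set w : ℝ → ℝ := iteratedDeriv m v with hw
  have hwe : ∀ j : ℕ, iteratedDeriv j w = iteratedDeriv (j + m) v := by
    intro j
    rw [hw, iteratedDeriv_eq_iterate, iteratedDeriv_eq_iterate, iteratedDeriv_eq_iterate,
      Function.iterate_add]
    rfl
  have hws : ContDiff ℝ (⊤ : ℕ∞) w := by
    rw [hw, iteratedDeriv_eq_iterate]
    exact (hvs.of_le (by simp)).iterate_deriv m
  set M : ℝ := max ((n : ℝ) + (m : ℝ)) μ⁻¹ with hM
  have hM0 : 0 ≤ M := le_trans (by positivity) (le_max_left _ _)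
  -- Leibniz bound
  have h1 : |iteratedDeriv n (fun y => g y * w y) x| ≤
      ∑ i ∈ Finset.range (n + 1), (n.choose i : ℝ) * |iteratedDeriv i g x| *
        |iteratedDeriv (n - i) w x| := by
    have := norm_iteratedFDeriv_mul_le (𝕜 := ℝ) (hgs.of_le (by simp) : ContDiff ℝ (⊤ : ℕ∞) g)
      hws x (n := n) (by exact_mod_cast le_top)
    simpa [norm_iteratedFDeriv_eq_norm_iteratedDeriv, Real.norm_eq_abs] using this
  refine h1.trans ?_
  -- termwise bound
  have hterm : ∀ i ∈ Finset.range (n + 1),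
      (n.choose i : ℝ) * |iteratedDeriv i g x| * |iteratedDeriv (n - i) w x| ≤
        (2⁻¹ : ℝ) ^ i * (Cg * Cv * γv ^ (n + m) * M ^ (n + m)) := by
    intro i hi
    have hin : i ≤ n := Nat.lt_succ_iff.mp (Finset.mem_range.mp hi)
    have hg_i := hgb i x hx
    have hv_i : |iteratedDeriv (n - i) w x| ≤
        Cv * γv ^ (n - i + m) * M ^ (n - i + m) := by
      rw [hwe]
      refine (hvb (n - i + m) x hx).trans ?_
      have hle : max ((n - i + m : ℕ) : ℝ) μ⁻¹ ≤ M := by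
        apply max_le_max _ le_rfl
        push_cast
        exact add_le_add (by exact_mod_cast Nat.sub_le n i) le_rfl
      gcongr
    have hnM : (n : ℝ) ≤ M := le_trans (le_add_of_nonneg_right (by positivity)) (le_max_left _ _)
    have hd1 : (n.descFactorial i : ℝ) ≤ M ^ i := by
      calc (n.descFactorial i : ℝ) ≤ (n : ℝ) ^ i := by
            exact_mod_cast Nat.descFactorial_le_pow n i
        _ ≤ M ^ i := by gcongr
    have hg2 : γg ^ i ≤ (2⁻¹ : ℝ) ^ i * γv ^ i := by
      rw [← mul_pow]
      exact pow_le_pow_left₀ hγg.le (by linarith) i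
    have hkey : (n.choose i : ℝ) * i.factorial = n.descFactorial i := by
      rw [Nat.descFactorial_eq_factorial_mul_choose]; push_cast; ring
    calc (n.choose i : ℝ) * |iteratedDeriv i g x| * |iteratedDeriv (n - i) w x|
        ≤ (n.choose i : ℝ) * (Cg * γg ^ i * i.factorial) *
            (Cv * γv ^ (n - i + m) * M ^ (n - i + m)) := by
          have h0 : (0:ℝ) ≤ (n.choose i : ℝ) := Nat.cast_nonneg _
          have h1' : |iteratedDeriv i g x| ≤ Cg * γg ^ i * i.factorial := hg_i
          gcongr
      _ = ((n.choose i : ℝ) * i.factorial) * γg ^ i *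
            (Cg * Cv * γv ^ (n - i + m) * M ^ (n - i + m)) := by ring
      _ = (n.descFactorial i : ℝ) * γg ^ i *
            (Cg * Cv * γv ^ (n - i + m) * M ^ (n - i + m)) := by rw [hkey]
      _ ≤ M ^ i * ((2⁻¹ : ℝ) ^ i * γv ^ i) *
            (Cg * Cv * γv ^ (n - i + m) * M ^ (n - i + m)) := by
          gcongr
      _ = (2⁻¹ : ℝ) ^ i * (Cg * Cv * (γv ^ i * γv ^ (n - i + m)) *
            (M ^ i * M ^ (n - i + m))) := by ring
      _ = (2⁻¹ : ℝ) ^ i * (Cg * Cv * γv ^ (n + m) * M ^ (n + m)) := by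
          rw [← pow_add, ← pow_add]
          have : i + (n - i + m) = n + m := by omega
          rw [this]
  calc ∑ i ∈ Finset.range (n + 1), (n.choose i : ℝ) * |iteratedDeriv i g x| *
        |iteratedDeriv (n - i) w x|
      ≤ ∑ i ∈ Finset.range (n + 1),
          (2⁻¹ : ℝ) ^ i * (Cg * Cv * γv ^ (n + m) * M ^ (n + m)) :=
        Finset.sum_le_sum hterm
    _ = (∑ i ∈ Finset.range (n + 1), (2⁻¹ : ℝ) ^ i) *
          (Cg * Cv * γv ^ (n + m) * M ^ (n + m)) := by rw [Finset.sum_mul]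
    _ ≤ 2 * (Cg * Cv * γv ^ (n + m) * M ^ (n + m)) := by
        have hK : (0:ℝ) ≤ Cg * Cv * γv ^ (n + m) * M ^ (n + m) := by positivity
        exact mul_le_mul_of_nonneg_right (geo_half (n + 1)) hK
    _ = 2 * Cg * Cv * γv ^ (n + m) * M ^ (n + m) := by ring
end

section
/- There exist δ₀ > 0 and C₀ > 0 such that for every δ ∈ (0, δ₀], every m ∈ ℕ, and every integer i ≥ 1: Σ_{n=0}^{i−1} δ^{i−1−n} · (n+m)^n/(i+m)^i · (i+n+1+m)^{i+n+1+m}/(2n+1+m)^{2n+1+m} ≤ C₀. -/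
open Finset

private lemma key_pow (x d : ℕ) (hx : 1 ≤ x) :
    ((x : ℝ) + d) ^ x ≤ (x : ℝ) ^ x * Real.exp d := by
  have hx0 : (0 : ℝ) < x := by exact_mod_cast hx
  have h1 : (x : ℝ) + d = x * (1 + d / x) := by field_simp
  rw [h1, mul_pow]
  have h2 : (1 : ℝ) + d / x ≤ Real.exp ((d : ℝ) / x) := by
    linarith [Real.add_one_le_exp ((d : ℝ) / x)]
  have h3 : (1 + (d : ℝ) / x) ^ x ≤ (Real.exp ((d : ℝ) / x)) ^ x :=
    pow_le_pow_left₀ (by positivity) h2 x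
  have h4 : (Real.exp ((d : ℝ) / x)) ^ x = Real.exp d := by
    rw [← Real.exp_nat_mul]
    congr 1
    field_simp
  calc (x : ℝ) ^ x * (1 + (d : ℝ) / x) ^ x
      ≤ (x : ℝ) ^ x * (Real.exp ((d : ℝ) / x)) ^ x := by gcongr
    _ = (x : ℝ) ^ x * Real.exp d := by rw [h4]

private lemma term_bound (δ : ℝ) (hδ0 : 0 < δ) (hδ : δ ≤ 1 / 12) (m i n : ℕ) (hn : n < i) :
    δ ^ (i - 1 - n) * (((n : ℝ) + (m : ℝ)) ^ n / ((i : ℝ) + (m : ℝ)) ^ i) *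
        (((i : ℝ) + (n : ℝ) + 1 + (m : ℝ)) ^ (i + n + 1 + m) /
          (2 * (n : ℝ) + 1 + (m : ℝ)) ^ (2 * n + 1 + m)) ≤
      2 * Real.exp 1 * (1 / 2) ^ (i - 1 - n) := by
  set j := i - 1 - n with hj
  have hij : i = n + (j + 1) := by omega
  set A := i + m with hA
  set B := n + m with hB
  set X := 2 * n + 1 + m with hX
  set Y := i + n + 1 + m with hY
  have hYX : Y = X + (j + 1) := by omega
  have hA1 : 1 ≤ A := by omega
  have hX1 : 1 ≤ X := by omega
  have hA0 : (0 : ℝ) < (A : ℝ) := by exact_mod_cast hA1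
  have hX0 : (0 : ℝ) < (X : ℝ) := by exact_mod_cast hX1
  have hcastA : (i : ℝ) + (m : ℝ) = (A : ℝ) := by push_cast [hA]; ring
  have hcastB : (n : ℝ) + (m : ℝ) = (B : ℝ) := by push_cast [hB]; ring
  have hcastX : 2 * (n : ℝ) + 1 + (m : ℝ) = (X : ℝ) := by push_cast [hX]; ring
  have hcastY : (i : ℝ) + (n : ℝ) + 1 + (m : ℝ) = (Y : ℝ) := by push_cast [hY]; ring
  rw [hcastA, hcastB, hcastX, hcastY]
  -- bound Y^Y
  have hYY : (Y : ℝ) ^ Y ≤ (X : ℝ) ^ X * Real.exp (j + 1) * (2 * A) ^ (j + 1) := by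
    have hYA : (Y : ℝ) ≤ 2 * A := by
      have : Y ≤ 2 * A := by omega
      calc (Y : ℝ) ≤ ((2 * A : ℕ) : ℝ) := by exact_mod_cast this
        _ = 2 * A := by push_cast; ring
    have h1 : (Y : ℝ) ^ X ≤ (X : ℝ) ^ X * Real.exp (j + 1) := by
      have := key_pow X (j + 1) hX1
      have hY' : (Y : ℝ) = (X : ℝ) + (j + 1 : ℕ) := by
        rw [hYX]; push_cast; ring
      rw [hY', ]
      calc ((X : ℝ) + ((j + 1 : ℕ) : ℝ)) ^ X ≤ (X : ℝ) ^ X * Real.exp ((j + 1 : ℕ) : ℝ) := this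
        _ = (X : ℝ) ^ X * Real.exp (j + 1) := by norm_cast
    calc (Y : ℝ) ^ Y = (Y : ℝ) ^ X * (Y : ℝ) ^ (j + 1) := by rw [hYX, pow_add]
      _ ≤ ((X : ℝ) ^ X * Real.exp (j + 1)) * (2 * A) ^ (j + 1) := by
          gcongr <;> positivity

  have hBA : (B : ℝ) ^ n ≤ (A : ℝ) ^ n := by
    gcongr
    exact_mod_cast (by omega : B ≤ A)
  have hXpow : (0 : ℝ) < (X : ℝ) ^ X := by positivity
  have hApow : (0 : ℝ) < (A : ℝ) ^ i := by positivity
  have hrw : δ ^ j * ((B : ℝ) ^ n / (A : ℝ) ^ i) * ((Y : ℝ) ^ Y / (X : ℝ) ^ X) =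
      δ ^ j * ((B : ℝ) ^ n * (Y : ℝ) ^ Y) / ((A : ℝ) ^ i * (X : ℝ) ^ X) := by
    field_simp
  rw [hrw, div_le_iff₀ (by positivity)]
  have hexp1 : (0 : ℝ) < Real.exp 1 := Real.exp_pos 1
  have hexpj : Real.exp ((j : ℝ) + 1) = Real.exp 1 ^ (j + 1) := by
    rw [← Real.exp_nat_mul]
    congr 1
    push_cast; ring
  calc δ ^ j * ((B : ℝ) ^ n * (Y : ℝ) ^ Y)
      ≤ δ ^ j * ((A : ℝ) ^ n * ((X : ℝ) ^ X * Real.exp (j + 1) * (2 * A) ^ (j + 1))) := by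
        gcongr
    _ = (2 * Real.exp 1 * δ) ^ j * (2 * Real.exp 1) * ((A : ℝ) ^ (n + (j + 1)) * (X : ℝ) ^ X) := by
        rw [hexpj, pow_add]
        ring
    _ ≤ (1 / 2) ^ j * (2 * Real.exp 1) * ((A : ℝ) ^ (n + (j + 1)) * (X : ℝ) ^ X) := by
        gcongr
        have he : Real.exp 1 ≤ 3 := by
          have := Real.exp_one_lt_d9
          linarith
        nlinarith
    _ = 2 * Real.exp 1 * (1 / 2) ^ j * ((A : ℝ) ^ i * (X : ℝ) ^ X) := by
        rw [← hij]; ring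

/-- Elementary summation inequality: there exist `δ₀, C₀ > 0` such that for all
`δ ∈ (0, δ₀]`, `m ∈ ℕ` and `i ≥ 1`,
`Σ_{n=0}^{i-1} δ^{i-1-n} (n+m)^n/(i+m)^i · (i+n+1+m)^{i+n+1+m}/(2n+1+m)^{2n+1+m} ≤ C₀`. -/
theorem stmt_12 :
    ∃ δ₀ C₀ : ℝ, 0 < δ₀ ∧ 0 < C₀ ∧
      ∀ δ : ℝ, 0 < δ → δ ≤ δ₀ → ∀ m : ℕ, ∀ i : ℕ, 1 ≤ i →
        ∑ n ∈ range i,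
            δ ^ (i - 1 - n) * (((n : ℝ) + (m : ℝ)) ^ n / ((i : ℝ) + (m : ℝ)) ^ i) *
              (((i : ℝ) + (n : ℝ) + 1 + (m : ℝ)) ^ (i + n + 1 + m) /
                (2 * (n : ℝ) + 1 + (m : ℝ)) ^ (2 * n + 1 + m)) ≤
          C₀ := by
  refine ⟨1 / 12, 12, by norm_num, by norm_num, fun δ hδ0 hδ m i hi => ?_⟩
  have hexp1 : (0 : ℝ) < Real.exp 1 := Real.exp_pos 1
  calc ∑ n ∈ range i,
          δ ^ (i - 1 - n) * (((n : ℝ) + (m : ℝ)) ^ n / ((i : ℝ) + (m : ℝ)) ^ i) *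
            (((i : ℝ) + (n : ℝ) + 1 + (m : ℝ)) ^ (i + n + 1 + m) /
              (2 * (n : ℝ) + 1 + (m : ℝ)) ^ (2 * n + 1 + m))
      ≤ ∑ n ∈ range i, 2 * Real.exp 1 * (1 / 2 : ℝ) ^ (i - 1 - n) := by
        apply Finset.sum_le_sum
        intro n hn
        exact term_bound δ hδ0 hδ m i n (Finset.mem_range.mp hn)
    _ = 2 * Real.exp 1 * ∑ n ∈ range i, (1 / 2 : ℝ) ^ (i - 1 - n) := by
        rw [Finset.mul_sum]
    _ = 2 * Real.exp 1 * ∑ n ∈ range i, (1 / 2 : ℝ) ^ n := by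
        rw [Finset.sum_range_reflect (fun k => (1 / 2 : ℝ) ^ k) i]
    _ ≤ 2 * Real.exp 1 * 2 := by
        gcongr
        exact sum_geometric_two_le i
    _ ≤ 12 := by
        have he : Real.exp 1 ≤ 3 := by
          have := Real.exp_one_lt_d9
          linarith
        nlinarith
end

section
/- Let ν ∈ (0,1], let E := diag(ν², 1), let β₀ > 0, and let B ∈ ℝ^{2×2} satisfy xᵀBx ≥ β₀²‖x‖² for all x ∈ ℝ². For α ∈ ℝ define ‖U‖²_{1,α} := ∫₀^∞ e^{2αx}(U'(x)·E U'(x) + U(x)·B U(x)) dx and a(U,V) := ∫₀^∞ (U'(x)·E V'(x) + U(x)·B V(x)) dx. Let 0 < β < β₀ and let U : (0,∞) → ℝ² be continuously differentiable with ‖U‖_{1,β} < ∞. Then the function V(x) := e^{2βx} U(x) satisfies ‖V‖_{1,−β} ≤ 2(1 + β/β₀)·‖U‖_{1,β} and a(U,V) ≥ (1 − β/β₀)·‖U‖²_{1,β}; in particular a(U,V) ≥ ((β₀−β)/(2(β₀+β)))·‖U‖_{1,β}·‖V‖_{1,−β}. -/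
/-!
Write `t = β/β₀`. Since `E ≤ I` and `B ≥ β₀² I`, the energy density `p = U'·EU' + U·BU` dominates
`β₀²·U·EU`, and positivity of `E` on `U' ± β₀U` gives the pointwise bound `2β₀|U'·EU| ≤ p`.
With `V = e^{2βx}U` both integrands are multiples of `e^{2βx}`: the integrand of `a(U,V)` is
`e^{2βx}(p + 2β U'·EU)`, which lies within `t·e^{2βx}p` of `e^{2βx}p`, and the integrand of
`‖V‖²_{1,-β}` is `e^{2βx}(p + 4β U'·EU + 4β² U·EU) ≤ 4(1+t)²e^{2βx}p`. Integrating gives the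
continuity and coercivity bounds, and their quotient is the inf-sup constant.
-/

open Matrix Set MeasureTheory

/-- The diagonal matrix `E = diag(ν², 1)`. -/
noncomputable def Emat (ν : ℝ) : Matrix (Fin 2) (Fin 2) ℝ := !![ν ^ 2, 0; 0, 1]

/-- The squared exponentially weighted norm
`‖W‖²_{1,α} = ∫₀^∞ e^{2αx}(W'·EW' + W·BW) dx` on the half line. -/
noncomputable def wnormSq (ν : ℝ) (B : Matrix (Fin 2) (Fin 2) ℝ) (α : ℝ)
    (W W' : ℝ → Fin 2 → ℝ) : ℝ :=
  ∫ x in Ioi (0:ℝ),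
    Real.exp (2 * α * x) * (W' x ⬝ᵥ (Emat ν *ᵥ W' x) + W x ⬝ᵥ (B *ᵥ W x))

def formDensity {ι : Type*} [Fintype ι] (E B : Matrix ι ι ℝ) (u u' v v' : ι → ℝ) : ℝ :=
  u' ⬝ᵥ E *ᵥ v' + u ⬝ᵥ B *ᵥ v

section FormDensity

variable {ι : Type*} [Fintype ι] {E B : Matrix ι ι ℝ} {β₀ β : ℝ}

lemma Matrix.PosSemidef.dotProduct_mulVec_comm (hE : E.PosSemidef) (u v : ι → ℝ) :
    u ⬝ᵥ E *ᵥ v = v ⬝ᵥ E *ᵥ u := by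
  rw [← dotProduct_transpose_mulVec, ← conjTranspose_eq_transpose_of_trivial, hE.isHermitian.eq]

lemma Matrix.PosSemidef.two_mul_dotProduct_mulVec_le (hE : E.PosSemidef) (r : ℝ)
    (u v : ι → ℝ) :
    2 * r * (v ⬝ᵥ E *ᵥ u) ≤ v ⬝ᵥ E *ᵥ v + r ^ 2 * (u ⬝ᵥ E *ᵥ u) := by
  have h := hE.dotProduct_mulVec_nonneg (v - r • u)
  simp only [star_trivial, mulVec_sub, mulVec_smul, sub_dotProduct, dotProduct_sub,
    smul_dotProduct, dotProduct_smul, hE.dotProduct_mulVec_comm u v, smul_eq_mul] at h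
  linarith

-- `(s • u, (2 * β * s) • u + s • u')` is the value of `(V, V')` at `x` when `s = e^{2βx}`.
lemma formDensity_smul_test (s : ℝ) (u u' : ι → ℝ) :
    formDensity E B u u' (s • u) ((2 * β * s) • u + s • u') =
      s * (formDensity E B u u' u u' + 2 * β * (u' ⬝ᵥ E *ᵥ u)) := by
  simp only [formDensity, mulVec_add, mulVec_smul, dotProduct_add, dotProduct_smul, smul_eq_mul]
  ring

lemma inv_mul_formDensity_smul_test (hE : E.PosSemidef) {s : ℝ} (hs : s ≠ 0) (u u' : ι → ℝ) :
    s⁻¹ * formDensity E B (s • u) ((2 * β * s) • u + s • u') (s • u) ((2 * β * s) • u + s • u') =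
      s * (formDensity E B u u' u u' + 4 * β * (u' ⬝ᵥ E *ᵥ u) + 4 * β ^ 2 * (u ⬝ᵥ E *ᵥ u)) := by
  simp only [formDensity, mulVec_add, mulVec_smul, dotProduct_add, add_dotProduct,
    dotProduct_smul, smul_dotProduct, smul_eq_mul, hE.dotProduct_mulVec_comm u u']
  field_simp
  ring

variable (hE : E.PosSemidef) (hEB : ∀ x, β₀ ^ 2 * (x ⬝ᵥ E *ᵥ x) ≤ x ⬝ᵥ B *ᵥ x)
include hE hEB

lemma sq_mul_le_formDensity (u u' : ι → ℝ) :
    β₀ ^ 2 * (u ⬝ᵥ E *ᵥ u) ≤ formDensity E B u u' u u' := by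
  have := hE.dotProduct_mulVec_nonneg u'
  simp only [star_trivial] at this
  unfold formDensity
  linarith [hEB u]

lemma formDensity_nonneg (u u' : ι → ℝ) : 0 ≤ formDensity E B u u' u u' :=
  (mul_nonneg (sq_nonneg β₀) (by simpa using hE.dotProduct_mulVec_nonneg u)).trans
    (sq_mul_le_formDensity hE hEB u u')

lemma two_mul_abs_dotProduct_mulVec_le (hβ₀ : 0 < β₀) (hβ : 0 ≤ β) (u u' : ι → ℝ) :
    2 * β * |u' ⬝ᵥ E *ᵥ u| ≤ β / β₀ * formDensity E B u u' u u' := by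
  have hpos := hE.two_mul_dotProduct_mulVec_le β₀ u u'
  have hneg := hE.two_mul_dotProduct_mulVec_le (-β₀) u u'
  rw [neg_sq] at hneg
  have h : |2 * β₀ * (u' ⬝ᵥ E *ᵥ u)| ≤ formDensity E B u u' u u' := by
    unfold formDensity
    have := hEB u
    exact abs_le.mpr ⟨by linarith, by linarith⟩
  calc 2 * β * |u' ⬝ᵥ E *ᵥ u| = β / β₀ * |2 * β₀ * (u' ⬝ᵥ E *ᵥ u)| := by
        rw [abs_mul, abs_of_pos (by positivity : (0 : ℝ) < 2 * β₀)]
        field_simp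
    _ ≤ β / β₀ * formDensity E B u u' u u' := by gcongr

lemma abs_formDensity_smul_test_sub_le (hβ₀ : 0 < β₀) (hβ : 0 ≤ β) {s : ℝ} (hs : 0 ≤ s)
    (u u' : ι → ℝ) :
    |formDensity E B u u' (s • u) ((2 * β * s) • u + s • u') - s * formDensity E B u u' u u'| ≤
      β / β₀ * (s * formDensity E B u u' u u') := by
  rw [formDensity_smul_test, mul_add, add_sub_cancel_left, abs_mul, abs_of_nonneg hs,
    mul_left_comm]
  gcongr
  rw [abs_mul, abs_mul, abs_two, abs_of_nonneg hβ]
  exact two_mul_abs_dotProduct_mulVec_le hE hEB hβ₀ hβ u u'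

lemma formDensity_test_le (hβ₀ : 0 < β₀) (hβ : 0 ≤ β) (u u' : ι → ℝ) :
    formDensity E B u u' u u' + 4 * β * (u' ⬝ᵥ E *ᵥ u) + 4 * β ^ 2 * (u ⬝ᵥ E *ᵥ u) ≤
      (2 * (1 + β / β₀)) ^ 2 * formDensity E B u u' u u' := by
  have hp := formDensity_nonneg hE hEB u u'
  have hcross := two_mul_abs_dotProduct_mulVec_le hE hEB hβ₀ hβ u u'
  have hq : 4 * β ^ 2 * (u ⬝ᵥ E *ᵥ u) ≤ 4 * (β / β₀) ^ 2 * formDensity E B u u' u u' := by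
    have := sq_mul_le_formDensity hE hEB u u'
    calc 4 * β ^ 2 * (u ⬝ᵥ E *ᵥ u) = 4 * (β / β₀) ^ 2 * (β₀ ^ 2 * (u ⬝ᵥ E *ᵥ u)) := by
          field_simp
      _ ≤ _ := by gcongr
  have ht : 0 ≤ β / β₀ := by positivity
  have hc := mul_le_mul_of_nonneg_left (le_abs_self (u' ⬝ᵥ E *ᵥ u)) hβ
  nlinarith [mul_nonneg ht hp, mul_nonneg (sq_nonneg (β / β₀)) hp]

end FormDensity

lemma Emat_eq_diagonal (ν : ℝ) : Emat ν = diagonal ![ν ^ 2, 1] := by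
  ext i j; fin_cases i <;> fin_cases j <;> simp [Emat]

lemma posSemidef_Emat (ν : ℝ) : (Emat ν).PosSemidef := by
  rw [Emat_eq_diagonal, posSemidef_diagonal_iff, Fin.forall_fin_two]
  exact ⟨sq_nonneg ν, zero_le_one⟩

lemma dotProduct_Emat_mulVec_self_le {ν : ℝ} (hν : ν ^ 2 ≤ 1) (x : Fin 2 → ℝ) :
    x ⬝ᵥ Emat ν *ᵥ x ≤ x ⬝ᵥ x := by
  simp only [Emat_eq_diagonal, mulVec_diagonal, dotProduct, Fin.sum_univ_two, cons_val_zero,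
    cons_val_one]
  nlinarith [mul_self_nonneg (x 0)]

section WeightedNorm

variable {ν β₀ β : ℝ} {B : Matrix (Fin 2) (Fin 2) ℝ} {U U' : ℝ → Fin 2 → ℝ}

lemma wnormSq_nonneg (hEB : ∀ x, β₀ ^ 2 * (x ⬝ᵥ Emat ν *ᵥ x) ≤ x ⬝ᵥ B *ᵥ x) (α : ℝ)
    (W W' : ℝ → Fin 2 → ℝ) : 0 ≤ wnormSq ν B α W W' :=
  setIntegral_nonneg measurableSet_Ioi fun x _ =>
    mul_nonneg (Real.exp_pos _).le (formDensity_nonneg (posSemidef_Emat ν) hEB (W x) (W' x))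

variable (hEB : ∀ x, β₀ ^ 2 * (x ⬝ᵥ Emat ν *ᵥ x) ≤ x ⬝ᵥ B *ᵥ x) (hβ₀ : 0 < β₀) (hβ : 0 ≤ β)
  (hfin : IntegrableOn (fun x => Real.exp (2 * β * x) *
    formDensity (Emat ν) B (U x) (U' x) (U x) (U' x)) (Ioi 0))
include hEB hβ₀ hβ hfin

lemma sqrt_wnormSq_test_le :
    Real.sqrt (wnormSq ν B (-β) (fun x => Real.exp (2 * β * x) • U x)
        (fun x => (2 * β * Real.exp (2 * β * x)) • U x + Real.exp (2 * β * x) • U' x)) ≤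
      2 * (1 + β / β₀) * Real.sqrt (wnormSq ν B β U U') := by
  have hE := posSemidef_Emat ν
  have hle : wnormSq ν B (-β) (fun x => Real.exp (2 * β * x) • U x)
      (fun x => (2 * β * Real.exp (2 * β * x)) • U x + Real.exp (2 * β * x) • U' x) ≤
      (2 * (1 + β / β₀)) ^ 2 * wnormSq ν B β U U' := by
    unfold wnormSq
    rw [← integral_const_mul]
    refine integral_mono_of_nonneg (ae_of_all _ fun x => ?_) (hfin.const_mul _)
      (ae_of_all _ fun x => ?_)
    · exact mul_nonneg (Real.exp_pos _).le (formDensity_nonneg hE hEB _ _)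
    · change Real.exp (2 * -β * x) * formDensity (Emat ν) B _ _ _ _ ≤
        _ * (_ * formDensity _ _ _ _ _ _)
      rw [show 2 * -β * x = -(2 * β * x) by ring, Real.exp_neg,
        inv_mul_formDensity_smul_test hE (Real.exp_pos _).ne', mul_left_comm]
      gcongr
      exact formDensity_test_le hE hEB hβ₀ hβ _ _
  calc _ ≤ Real.sqrt ((2 * (1 + β / β₀)) ^ 2 * wnormSq ν B β U U') := Real.sqrt_le_sqrt hle
    _ = 2 * (1 + β / β₀) * Real.sqrt (wnormSq ν B β U U') := by
      rw [Real.sqrt_mul (sq_nonneg _), Real.sqrt_sq (by positivity)]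

lemma wnormSq_le_integral_formDensity_test (hU : ∀ x ∈ Ioi (0:ℝ), HasDerivAt U (U' x) x)
    (hU'c : ContinuousOn U' (Ioi 0)) :
    (1 - β / β₀) * wnormSq ν B β U U' ≤
      ∫ x in Ioi (0:ℝ), formDensity (Emat ν) B (U x) (U' x) (Real.exp (2 * β * x) • U x)
        ((2 * β * Real.exp (2 * β * x)) • U x + Real.exp (2 * β * x) • U' x) := by
  have hE := posSemidef_Emat ν
  have hUc : ContinuousOn U (Ioi 0) := fun x hx => (hU x hx).continuousAt.continuousWithinAt
  have hclose x := abs_le.mp <| abs_formDensity_smul_test_sub_le hE hEB hβ₀ hβ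
    (Real.exp_pos (2 * β * x)).le (U x) (U' x)
  have hint : IntegrableOn (fun x => formDensity (Emat ν) B (U x) (U' x)
      (Real.exp (2 * β * x) • U x)
      ((2 * β * Real.exp (2 * β * x)) • U x + Real.exp (2 * β * x) • U' x)) (Ioi 0) := by
    refine Integrable.mono' (hfin.const_mul (1 + β / β₀)) ?_ (ae_of_all _ fun x => ?_)
    · refine ContinuousOn.aestronglyMeasurable ?_ measurableSet_Ioi
      unfold formDensity
      fun_prop
    · have hp := mul_nonneg (Real.exp_pos (2 * β * x)).le
        (formDensity_nonneg hE hEB (U x) (U' x))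
      have ht : 0 ≤ β / β₀ := by positivity
      rw [Real.norm_eq_abs, abs_le]
      constructor <;> nlinarith [hclose x, mul_nonneg ht hp]
  unfold wnormSq
  rw [← integral_const_mul]
  refine integral_mono (hfin.const_mul _) hint fun x => ?_
  change _ * (_ * formDensity _ _ _ _ _ _) ≤ _
  linarith [hclose x]

end WeightedNorm

lemma mul_mul_le_of_le_mul_of_mul_sq_le {γ C a x y : ℝ} (hγ : 0 ≤ γ) (hC : 0 < C) (hx : 0 ≤ x)
    (hy : y ≤ C * x) (ha : γ * x ^ 2 ≤ a) : γ / C * x * y ≤ a :=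
  calc γ / C * x * y ≤ γ / C * x * (C * x) := by gcongr
    _ = γ * x ^ 2 := by field_simp
    _ ≤ a := ha

/-- Inf-sup stability in exponentially weighted spaces on `(0,∞)` for the
bilinear form of the elliptic system `-EU'' + BU`: the test function
`V(x) = e^{2βx}U(x)` satisfies `‖V‖_{1,-β} ≤ 2(1+β/β₀)‖U‖_{1,β}`,
`a(U,V) ≥ (1-β/β₀)‖U‖²_{1,β}` and hence
`a(U,V) ≥ ((β₀-β)/(2(β₀+β)))‖U‖_{1,β}‖V‖_{1,-β}`. -/
theorem stmt_13 (ν β₀ β : ℝ) (hν : 0 < ν) (hν1 : ν ≤ 1) (hβ₀ : 0 < β₀)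
    (hβpos : 0 < β) (hβ : β < β₀)
    (B : Matrix (Fin 2) (Fin 2) ℝ)
    (hB : ∀ x : Fin 2 → ℝ, β₀ ^ 2 * (x ⬝ᵥ x) ≤ x ⬝ᵥ (B *ᵥ x))
    (U U' : ℝ → Fin 2 → ℝ)
    (hU : ∀ x ∈ Ioi (0:ℝ), HasDerivAt U (U' x) x)
    (hU'c : ContinuousOn U' (Ioi 0))
    (hfin : IntegrableOn
      (fun x => Real.exp (2 * β * x) *
        (U' x ⬝ᵥ (Emat ν *ᵥ U' x) + U x ⬝ᵥ (B *ᵥ U x))) (Ioi 0)) :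
    Real.sqrt (wnormSq ν B (-β) (fun x => Real.exp (2 * β * x) • U x)
        (fun x => (2 * β * Real.exp (2 * β * x)) • U x + Real.exp (2 * β * x) • U' x)) ≤
      2 * (1 + β / β₀) * Real.sqrt (wnormSq ν B β U U') ∧
    (1 - β / β₀) * wnormSq ν B β U U' ≤
      (∫ x in Ioi (0:ℝ),
        (U' x ⬝ᵥ (Emat ν *ᵥ
            ((2 * β * Real.exp (2 * β * x)) • U x + Real.exp (2 * β * x) • U' x)) +
          U x ⬝ᵥ (B *ᵥ (Real.exp (2 * β * x) • U x)))) ∧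
    ((β₀ - β) / (2 * (β₀ + β))) * Real.sqrt (wnormSq ν B β U U') *
        Real.sqrt (wnormSq ν B (-β) (fun x => Real.exp (2 * β * x) • U x)
          (fun x => (2 * β * Real.exp (2 * β * x)) • U x + Real.exp (2 * β * x) • U' x)) ≤
      (∫ x in Ioi (0:ℝ),
        (U' x ⬝ᵥ (Emat ν *ᵥ
            ((2 * β * Real.exp (2 * β * x)) • U x + Real.exp (2 * β * x) • U' x)) +
          U x ⬝ᵥ (B *ᵥ (Real.exp (2 * β * x) • U x)))) := by
  have hEB : ∀ x, β₀ ^ 2 * (x ⬝ᵥ Emat ν *ᵥ x) ≤ x ⬝ᵥ B *ᵥ x := fun x =>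
    (mul_le_mul_of_nonneg_left (dotProduct_Emat_mulVec_self_le (by nlinarith) x)
      (sq_nonneg β₀)).trans (hB x)
  have hnorm := sqrt_wnormSq_test_le hEB hβ₀ hβpos.le hfin
  have hcoer := wnormSq_le_integral_formDensity_test hEB hβ₀ hβpos.le hfin hU hU'c
  refine ⟨hnorm, hcoer, ?_⟩
  have ht : β / β₀ < 1 := (div_lt_one hβ₀).mpr hβ
  rw [show (β₀ - β) / (2 * (β₀ + β)) = (1 - β / β₀) / (2 * (1 + β / β₀)) by field_simp]
  refine mul_mul_le_of_le_mul_of_mul_sq_le (by linarith) (by positivity) (Real.sqrt_nonneg _)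
    hnorm ?_
  rwa [Real.sq_sqrt (wnormSq_nonneg hEB β U U')]
end
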